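/- arXiv:2601.01212 — 8 statements merged into one kernel-verified Lean document; each statement's English description precedes it below -/
import Mathlib

section
/- Let μ be a discrete (purely atomic) probability measure on ℂ. Let (k_n) be a sequence of integers with 1 ≤ k_n < n and k_n/n → 0. Then almost surely, the empirical measures μ_{P_n^{(k_n)}} of the zeros of the k_n-th derivative of P_n converge weakly to μ as n → ∞. -/
/-!
Every atom `a` of `μ` occurs about `μ{a} n` times among `ξ_0, …, ξ_{n-1}` (strong law of large
numbers), and a root of multiplicity `m` of `P_n` is a root of multiplicity at least `m - k` of
`P_n^{(k)}`. As `k_n = o(n)`, the empirical root measures `ν_n` of `P_n^{(k_n)}` therefore satisfy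
`μ{a} ≤ liminf ν_n{a}` at every atom. Since `μ` is carried by countably many atoms, this gives
`μ G ≤ liminf ν_n G` for every set `G`, and the portmanteau theorem yields weak convergence.
-/

open MeasureTheory ProbabilityTheory Polynomial Filter Topology
open scoped ENNReal

/-- The empirical probability measure of the roots of a polynomial (counted with
multiplicity), normalized by `m`. -/
noncomputable def empMeasure (P : Polynomial ℂ) (m : ℕ) : Measure ℂ :=
  ((m : ℝ≥0∞))⁻¹ • (P.roots.map Measure.dirac).sum

/-- The random monic polynomial `P_n(z) = ∏_{j<n} (z - ξ_j)`. -/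
noncomputable def Pn {Ω : Type*} (ξ : ℕ → Ω → ℂ) (n : ℕ) (ω : Ω) : Polynomial ℂ :=
  ∏ j ∈ Finset.range n, (X - C (ξ j ω))

theorem ENNReal.le_liminf_add {ι : Type*} {l : Filter ι} (u v : ι → ℝ≥0∞) :
    liminf u l + liminf v l ≤ liminf (u + v) l := by
  simp only [liminf_eq_iSup_iInf]
  refine ENNReal.biSup_add_biSup_le' ⟨_, univ_mem⟩ ⟨_, univ_mem⟩ fun s hs t ht => ?_
  refine le_iSup₂_of_le (s ∩ t) (inter_mem hs ht) (le_iInf₂ fun i hi => ?_)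
  exact add_le_add (iInf₂_le i hi.1) (iInf₂_le i hi.2)

theorem ENNReal.sum_liminf_le_liminf_sum {ι κ : Type*} {l : Filter ι} (s : Finset κ)
    (u : κ → ι → ℝ≥0∞) : ∑ j ∈ s, liminf (u j) l ≤ liminf (fun i => ∑ j ∈ s, u j i) l := by
  classical
  induction s using Finset.induction_on with
  | empty => simp
  | insert a s ha ih =>
    simp only [Finset.sum_insert ha]
    exact (add_le_add le_rfl ih).trans (ENNReal.le_liminf_add _ _)

theorem MeasureTheory.Measure.le_liminf_apply_of_le_liminf_apply_singleton {α ι : Type*}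
    [MeasurableSpace α] [MeasurableSingletonClass α] {μ : Measure α} {s : Set α}
    (hs : s.Countable) (hμs : μ sᶜ = 0) {ν : ι → Measure α} {l : Filter ι}
    (h : ∀ a ∈ s, μ {a} ≤ liminf (fun i => ν i {a}) l) (G : Set α) :
    μ G ≤ liminf (fun i => ν i G) l := by
  have hG : μ G = ∑' a : ↥(G ∩ s), μ {(a : α)} := by
    conv_lhs => rw [← measure_inter_conull hμs, ← Set.biUnion_of_singleton (G ∩ s)]
    exact measure_biUnion (hs.mono Set.inter_subset_right)
      (fun a _ b _ hab => Set.disjoint_singleton.2 hab) fun _ _ => measurableSet_singleton _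
  rw [hG]
  refine ENNReal.summable.tsum_le_of_sum_le fun F => ?_
  calc ∑ a ∈ F, μ {(a : α)}
      ≤ ∑ a ∈ F, liminf (fun i => ν i {(a : α)}) l :=
        Finset.sum_le_sum fun a _ => h a a.2.2
    _ ≤ liminf (fun i => ∑ a ∈ F, ν i {(a : α)}) l := ENNReal.sum_liminf_le_liminf_sum F _
    _ ≤ liminf (fun i => ν i G) l := by
        refine liminf_le_liminf (Eventually.of_forall fun i => ?_)
        rw [← Function.Embedding.coe_subtype, ← Finset.sum_map F _ fun a => ν i {a},
          sum_measure_singleton]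
        refine measure_mono fun x hx => ?_
        obtain ⟨a, -, rfl⟩ := Finset.mem_map.1 hx
        exact a.2.1

theorem MeasureTheory.tendsto_integral_of_le_liminf_apply_singleton {α : Type*} [TopologicalSpace α]
    [MeasurableSpace α] [OpensMeasurableSpace α] [MeasurableSingletonClass α] {μ : Measure α}
    [IsProbabilityMeasure μ] {s : Set α} (hs : s.Countable) (hμs : μ sᶜ = 0) {ν : ℕ → Measure α}
    [∀ n, IsProbabilityMeasure (ν n)] (h : ∀ a ∈ s, μ {a} ≤ liminf (fun n => ν n {a}) atTop)
    (φ : BoundedContinuousFunction α ℝ) :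
    Tendsto (fun n => ∫ x, φ x ∂ν n) atTop (𝓝 (∫ x, φ x ∂μ)) :=
  BoundedContinuousFunction.tendsto_integral_of_forall_integral_le_liminf_integral (fun _ hf =>
    integral_le_liminf_integral_of_forall_isOpen_measure_le_liminf_measure hf fun G _ =>
      Measure.le_liminf_apply_of_le_liminf_apply_singleton hs hμs h G) φ

open Finset in
theorem ProbabilityTheory.tendsto_card_filter_mem_div_ae {Ω α : Type*} {mΩ : MeasurableSpace Ω}
    {P : Measure Ω} [MeasurableSpace α] {μ : Measure α} [IsFiniteMeasure μ] {ξ : ℕ → Ω → α}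
    (hmeas : ∀ i, Measurable (ξ i)) (hindep : Pairwise fun i j => IndepFun (ξ i) (ξ j) P)
    (hdist : ∀ i, P.map (ξ i) = μ) {A : Set α} [DecidablePred (· ∈ A)] (hA : MeasurableSet A) :
    ∀ᵐ ω ∂P, Tendsto (fun n : ℕ => (#{j ∈ range n | ξ j ω ∈ A} : ℝ) / n) atTop
      (𝓝 (μ.real A)) := by
  have hg : Measurable (A.indicator (1 : α → ℝ)) := measurable_one.indicator hA
  let X (i : ℕ) : Ω → ℝ := A.indicator 1 ∘ ξ i
  have hint : Integrable (X 0) P := by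
    refine (integrable_map_measure hg.aestronglyMeasurable (hmeas 0).aemeasurable).1 ?_
    rw [hdist 0]
    exact (integrable_const 1).indicator hA
  have hident i : IdentDistrib (X i) (X 0) P P :=
    (IdentDistrib.mk (hmeas i).aemeasurable (hmeas 0).aemeasurable (by rw [hdist, hdist])).comp hg
  have hmean : P[X 0] = μ.real A := by
    change ∫ ω, A.indicator 1 (ξ 0 ω) ∂P = _
    rw [← integral_map (hmeas 0).aemeasurable hg.aestronglyMeasurable, hdist 0,
      integral_indicator_one hA]
  have hsum n ω : ∑ i ∈ range n, X i ω = #{j ∈ range n | ξ j ω ∈ A} := by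
    simp [X, Set.indicator_apply]
  filter_upwards [strong_law_ae_real X hint (fun i j hij => (hindep hij).comp hg hg) hident]
    with ω hω
  simpa only [hsum, hmean] using hω

theorem tendsto_sub_div_sub_of_tendsto_div {x y : ℕ → ℝ} {p : ℝ}
    (hx : Tendsto (fun n => x n / n) atTop (𝓝 p)) (hy : Tendsto (fun n => y n / n) atTop (𝓝 0)) :
    Tendsto (fun n => (x n - y n) / (n - y n)) atTop (𝓝 p) := by
  have h := (hx.sub hy).div (tendsto_const_nhds.sub hy) (by norm_num : (1 : ℝ) - 0 ≠ 0)
  rw [sub_zero, sub_zero, div_one] at h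
  refine h.congr' ((eventually_ne_atTop 0).mono fun n hn => ?_)
  have hn' : (n : ℝ) ≠ 0 := Nat.cast_ne_zero.2 hn
  simp only [Pi.div_apply]
  rw [← sub_div, ← div_self hn', ← sub_div, div_div_div_cancel_right₀ hn']

theorem Polynomial.natDegree_iterate_derivative_eq {R : Type*} [Semiring R] [IsAddTorsionFree R]
    (p : R[X]) (k : ℕ) : (derivative^[k] p).natDegree = p.natDegree - k := by
  induction k with
  | zero => rfl
  | succ k ih => rw [Function.iterate_succ_apply', natDegree_derivative, ih, Nat.sub_sub]

theorem Polynomial.rootMultiplicity_sub_le_rootMultiplicity_iterate_derivative {R : Type*}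
    [CommRing R] [NoZeroDivisors R] [CharZero R] (p : R[X]) (t : R) (k : ℕ) :
    p.rootMultiplicity t - k ≤ (derivative^[k] p).rootMultiplicity t := by
  induction k with
  | zero => rfl
  | succ k ih =>
    rw [Function.iterate_succ_apply', ← Nat.sub_sub]
    exact (Nat.sub_le_sub_right ih 1).trans
      (rootMultiplicity_sub_one_le_derivative_rootMultiplicity _ _)

theorem MeasureTheory.Measure.multisetSum_map_dirac_apply {α : Type*} [MeasurableSpace α]
    [MeasurableSingletonClass α] (s : Multiset α) (A : Set α) [DecidablePred (· ∈ A)] :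
    (s.map Measure.dirac).sum A = s.countP (· ∈ A) := by
  induction s using Multiset.induction with
  | empty => simp
  | cons b s ih =>
    by_cases hb : b ∈ A <;> simp [ih, dirac_apply, hb, add_comm]

theorem empMeasure_singleton (P : ℂ[X]) (m : ℕ) (a : ℂ) :
    empMeasure P m {a} = P.roots.count a / m := by
  rw [empMeasure, Measure.smul_apply, Measure.multisetSum_map_dirac_apply, smul_eq_mul,
    ENNReal.div_eq_inv_mul]
  simp [Multiset.count, eq_comm]

theorem isProbabilityMeasure_empMeasure {P : ℂ[X]} {m : ℕ} (hP : P.roots.card = m) (hm : m ≠ 0) :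
    IsProbabilityMeasure (empMeasure P m) := by
  constructor
  rw [empMeasure, Measure.smul_apply, Measure.multisetSum_map_dirac_apply, smul_eq_mul]
  simp [hP, ENNReal.inv_mul_cancel, hm]

theorem count_roots_Pn {Ω : Type*} (ξ : ℕ → Ω → ℂ) (n : ℕ) (ω : Ω) (a : ℂ) :
    (Pn ξ n ω).roots.count a = (Finset.filter (fun j => ξ j ω = a) (Finset.range n)).card := by
  have : (fun j => X - C (ξ j ω)) = (X - C ·) ∘ (ξ · ω) := rfl
  rw [Pn, Finset.prod_eq_multiset_prod, this, ← Multiset.map_map,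
    roots_multiset_prod_X_sub_C, Multiset.count_map]
  simp only [eq_comm (a := a)]
  rfl

theorem card_roots_iterate_derivative_Pn {Ω : Type*} (ξ : ℕ → Ω → ℂ) (n k : ℕ) (ω : Ω) :
    (derivative^[k] (Pn ξ n ω)).roots.card = n - k := by
  rw [IsAlgClosed.card_roots_eq_natDegree, natDegree_iterate_derivative_eq, Pn,
    natDegree_finsetProd_X_sub_C_eq_card, Finset.card_range]

theorem ofReal_le_liminf_empMeasure_iterate_derivative_singleton (P : ℕ → ℂ[X]) {k : ℕ → ℕ}
    (hk : Tendsto (fun n => (k n : ℝ) / n) atTop (𝓝 0)) (a : ℂ) {p : ℝ}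
    (hP : Tendsto (fun n => ((P n).roots.count a : ℝ) / n) atTop (𝓝 p)) :
    ENNReal.ofReal p ≤
      liminf (fun n => empMeasure (derivative^[k n] (P n)) (n - k n) {a}) atTop := by
  have hlim := ENNReal.tendsto_ofReal (tendsto_sub_div_sub_of_tendsto_div hP hk)
  have hkn : ∀ᶠ n in atTop, k n < n := by
    filter_upwards [hk.eventually (gt_mem_nhds one_pos), eventually_gt_atTop 0] with n hn hn0
    have : (0 : ℝ) < n := Nat.cast_pos.2 hn0
    exact_mod_cast (div_lt_one this).1 hn
  rw [← hlim.liminf_eq]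
  refine liminf_le_liminf (hkn.mono fun n hn => ?_)
  have hpos : (0 : ℝ) < n - k n := sub_pos.2 (Nat.cast_lt.2 hn)
  have hcount : ((P n).roots.count a : ℝ) - k n ≤ (derivative^[k n] (P n)).roots.count a := by
    have := rootMultiplicity_sub_le_rootMultiplicity_iterate_derivative (P n) a (k n)
    rw [count_roots, count_roots, sub_le_iff_le_add]
    exact_mod_cast Nat.sub_le_iff_le_add.1 this
  rw [empMeasure_singleton, ← ENNReal.ofReal_natCast, ← ENNReal.ofReal_natCast (n - k n),
    Nat.cast_sub hn.le, ← ENNReal.ofReal_div_of_pos hpos]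
  exact ENNReal.ofReal_le_ofReal (div_le_div_of_nonneg_right hcount hpos.le)

theorem discrete_measure_derivative_roots_converge_general
    {Ω : Type*} [MeasureSpace Ω]
    (μ : Measure ℂ) [IsProbabilityMeasure μ]
    (hdisc : ∃ s : Set ℂ, s.Countable ∧ μ sᶜ = 0)
    (ξ : ℕ → Ω → ℂ) (hmeas : ∀ i, Measurable (ξ i))
    (hindep : iIndepFun ξ ℙ)
    (hdist : ∀ i, Measure.map (ξ i) ℙ = μ)
    (k : ℕ → ℕ) (hk : ∀ n, 2 ≤ n → 1 ≤ k n ∧ k n < n)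
    (hko : Tendsto (fun n => (k n : ℝ) / n) atTop (𝓝 0)) :
    ∀ᵐ ω ∂ℙ, ∀ φ : BoundedContinuousFunction ℂ ℝ,
      Tendsto
        (fun n => ∫ x, φ x ∂(empMeasure (derivative^[k n] (Pn ξ n ω)) (n - k n)))
        atTop (𝓝 (∫ x, φ x ∂μ)) := by
  obtain ⟨s, hs, hμs⟩ := hdisc
  have hfreq : ∀ᵐ ω ∂ℙ, ∀ a ∈ s,
      Tendsto (fun n => ((Pn ξ n ω).roots.count a : ℝ) / n) atTop (𝓝 (μ.real {a})) := by
    refine (ae_ball_iff hs).2 fun a _ => ?_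
    filter_upwards [tendsto_card_filter_mem_div_ae hmeas (fun i j hij => hindep.indepFun hij)
      hdist (measurableSet_singleton a)] with ω hω
    simpa only [count_roots_Pn, Set.mem_singleton_iff] using hω
  filter_upwards [hfreq] with ω hω φ
  -- `empMeasure` is a probability measure only from `n = 2` on, so pass to the shifted sequence.
  have hprob n : IsProbabilityMeasure
      (empMeasure (derivative^[k (n + 2)] (Pn ξ (n + 2) ω)) (n + 2 - k (n + 2))) :=
    isProbabilityMeasure_empMeasure (card_roots_iterate_derivative_Pn ξ _ _ ω)
      (Nat.sub_ne_zero_of_lt (hk (n + 2) (Nat.le_add_left 2 n)).2)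
  refine (tendsto_add_atTop_iff_nat 2).1
    (tendsto_integral_of_le_liminf_apply_singleton hs hμs (fun a ha => ?_) φ)
  have := ofReal_le_liminf_empMeasure_iterate_derivative_singleton (Pn ξ · ω) hko a (hω a ha)
  rw [ofReal_measureReal] at this
  exact this.trans_eq (liminf_nat_add _ 2).symm

/-- for a discrete (purely atomic) probability measure `μ` on `ℂ` and
derivative orders `k_n = o(n)`, the empirical root measures of `P_n^{(k_n)}` converge
weakly to `μ` almost surely. -/
theorem discrete_measure_derivative_roots_converge
    {Ω : Type*} [MeasureSpace Ω] [IsProbabilityMeasure (ℙ : Measure Ω)]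
    (μ : Measure ℂ) [IsProbabilityMeasure μ]
    (hdisc : ∃ s : Set ℂ, s.Countable ∧ μ sᶜ = 0)
    (ξ : ℕ → Ω → ℂ) (hmeas : ∀ i, Measurable (ξ i))
    (hindep : iIndepFun ξ ℙ)
    (hdist : ∀ i, Measure.map (ξ i) ℙ = μ)
    (k : ℕ → ℕ) (hk : ∀ n, 2 ≤ n → 1 ≤ k n ∧ k n < n)
    (hko : Tendsto (fun n => (k n : ℝ) / n) atTop (𝓝 0)) :
    ∀ᵐ ω ∂ℙ, ∀ φ : BoundedContinuousFunction ℂ ℝ,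
      Tendsto
        (fun n => ∫ x, φ x ∂(empMeasure (derivative^[k n] (Pn ξ n ω)) (n - k n)))
        atTop (𝓝 (∫ x, φ x ∂μ)) :=
  discrete_measure_derivative_roots_converge_general μ hdisc ξ hmeas hindep hdist k hk hko
end

section
/- Let P be a monic complex polynomial of degree n ≥ 1, let 1 ≤ k < n, and set S(z) = P^{(k)}(z)/(k! P(z)). Let u(z) = (αz+β)/(γz+δ) with α,β,γ,δ ∈ ℂ and αδ−βγ ≠ 0, and assume that the preimage u^{-1}(D(0,1)) of the open unit disk is a bounded disk in ℂ (equivalently, γ = 0 or |α| > |γ|). Let a := u^{-1}(0) ∈ ℂ and suppose P(a) ≠ 0 and P^{(k)}(a) ≠ 0. Then Σ_{ρ} log⁻|u(ρ)| − Σ_{ζ} log⁻|u(ζ)| ≤ log sup{ |S(z)| : z ∈ ℂ, |u(z)| = 1 } − log|S(a)|, where the first sum runs over the zeros ρ of P^{(k)} counted with multiplicity, the second over the zeros ζ of P counted with multiplicity, and log⁻|u(ζ)| := 0 when ζ is the pole of u. -/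
/-!
Substituting `z = u⁻¹ w` turns `S` into `g w * ∏ (w - u ρ) / ∏ (w - u ζ)`, where `g` is a constant
times a power of `α - γ w`, hence zero-free on the closed unit disk, and the products run over the
roots other than the pole of `u`. Replacing each factor `w - c` with `|c| < 1` by `1 - c̄ w` keeps
all moduli on the unit circle, clears the open disk of zeros and poles, and multiplies the value at
`0` by `exp (log⁻ |c|)` for a zero and divides it by that for a pole; the maximum modulus principle
then gives the inequality. Once common zeros and poles are cancelled, a pole left on the circle
makes the supremum `⊤`. Since Lean's `S` vanishes at the zeros of `P`, values on the circle are
only compared away from finitely many points, as limits along the circle.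
-/

open Polynomial Filter Topology
open scoped ENNReal

/-- Since `Real.log 0 = 0` and `x / 0 = 0`, `logNeg ‖u ζ‖ = 0` at the pole `ζ` of `u`. -/
noncomputable def logNeg (t : ℝ) : ℝ := max (-Real.log t) 0

open Metric Set ComplexConjugate

theorem eventually_notMem_nhdsWithin_diff_singleton {X : Type*} [TopologicalSpace X]
    [T1Space X] {E : Set X} (hE : E.Finite) (s : Set X) (x : X) :
    ∀ᶠ z in 𝓝[s \ {x}] x, z ∉ E :=
  nhdsWithin_mono x (fun _ hz => hz.2) (nhdsNE_le_cofinite x hE.compl_mem_cofinite)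

theorem Preperfect.le_iSup_diff_of_tendsto {X α : Type*} [TopologicalSpace X] [T1Space X]
    [CompleteLattice α] [TopologicalSpace α] [ClosedIicTopology α] {s E : Set X}
    (hs : Preperfect s) (hE : E.Finite) {x : X} (hx : x ∈ s) {φ : X → α} {y : α}
    (hφ : Tendsto φ (𝓝[s \ {x}] x) (𝓝 y)) : y ≤ ⨆ z ∈ s \ E, φ z := by
  have : (𝓝[s \ {x}] x).NeBot := by
    have := hs x hx
    rwa [AccPt, nhdsWithin, inf_assoc, inf_principal, inter_comm, ← sdiff_eq] at this
  refine le_of_tendsto hφ ?_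
  filter_upwards [self_mem_nhdsWithin, eventually_notMem_nhdsWithin_diff_singleton hE s x]
    with z hz hzE
  exact le_iSup₂_of_le z ⟨hz.1, hzE⟩ le_rfl

theorem preperfect_sphere_zero_one : Preperfect (sphere (0 : ℂ) 1) := by
  refine (isConnected_sphere ?_ 0 zero_le_one).isPreconnected.preperfect_of_nontrivial
    ⟨1, by simp, -1, by simp, by norm_num⟩
  rw [Complex.rank_real_complex]
  norm_num

theorem EReal.coe_le_sub_coe_iff {x y : ℝ} {s : EReal} :
    (x : EReal) ≤ s - y ↔ ((y + x : ℝ) : EReal) ≤ s := by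
  rw [EReal.le_sub_iff_add_le (Or.inl (EReal.coe_ne_bot _)) (Or.inl (EReal.coe_ne_top _)),
    ← EReal.coe_add, add_comm]

theorem norm_multiset_prod_map {ι 𝕜 : Type*} [NormedField 𝕜] (s : Multiset ι) (f : ι → 𝕜) :
    ‖(s.map f).prod‖ = (s.map (‖f ·‖)).prod := by
  simpa [Multiset.map_map] using map_multiset_prod (normHom : 𝕜 →*₀ ℝ) (s.map f)

theorem Multiset.sum_map_sub_sub_sum_map_sub {α β : Type*} [DecidableEq α] [AddCommGroup β]
    (s t : Multiset α) (f : α → β) :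
    ((s - t).map f).sum - ((t - s).map f).sum = (s.map f).sum - (t.map f).sum := by
  calc _ = ((s - t + s ∩ t).map f).sum - ((t - s + s ∩ t).map f).sum := by
        simp only [map_add, sum_add]; abel
    _ = _ := by rw [sub_add_inter, inter_comm, sub_add_inter]

section ZeroPoleProd

variable {Z Q : Multiset ℂ} {w : ℂ}

noncomputable def zeroPoleProd (Z Q : Multiset ℂ) (w : ℂ) : ℂ :=
  (Z.map (w - ·)).prod / (Q.map (w - ·)).prod

theorem prod_map_sub_ne_zero_iff : (Q.map (w - ·)).prod ≠ 0 ↔ w ∉ Q := by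
  simp [Multiset.prod_eq_zero_iff, sub_eq_zero]

theorem continuous_prod_map_sub (Q : Multiset ℂ) : Continuous fun w => (Q.map (w - ·)).prod :=
  continuous_multiset_prod Q fun _ _ => by fun_prop

theorem continuousAt_zeroPoleProd (hw : w ∉ Q) : ContinuousAt (zeroPoleProd Z Q) w :=
  (continuous_prod_map_sub Z).continuousAt.div (continuous_prod_map_sub Q).continuousAt
    (prod_map_sub_ne_zero_iff.2 hw)

theorem zeroPoleProd_sub_sub (hw : w ∉ Q) :
    zeroPoleProd (Z - Q) (Q - Z) w = zeroPoleProd Z Q w := by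
  have hI : ((Z ∩ Q).map (w - ·)).prod ≠ 0 :=
    prod_map_sub_ne_zero_iff.2 fun h => hw (Multiset.mem_of_le Multiset.inter_le_right h)
  calc _ = zeroPoleProd (Z - Q + Z ∩ Q) (Q - Z + Z ∩ Q) w := by
        simp only [zeroPoleProd, Multiset.map_add, Multiset.prod_add, mul_div_mul_right _ _ hI]
    _ = _ := by rw [Multiset.sub_add_inter, Multiset.inter_comm, Multiset.sub_add_inter]

end ZeroPoleProd

section ReflectedFactor

variable {z w : ℂ}

/-- For `‖z‖ < 1`, the numerator of the Blaschke factor with zero `z`. -/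
noncomputable def reflectedFactor (z w : ℂ) : ℂ :=
  if ‖z‖ < 1 then 1 - conj z * w else w - z

theorem differentiable_reflectedFactor (z : ℂ) : Differentiable ℂ (reflectedFactor z) := by
  unfold reflectedFactor
  split_ifs <;> fun_prop

theorem norm_reflectedFactor_of_norm_eq_one (hw : ‖w‖ = 1) :
    ‖reflectedFactor z w‖ = ‖w - z‖ := by
  unfold reflectedFactor
  split_ifs
  · have hww : conj w * w = 1 := by rw [Complex.conj_mul', hw]; norm_num
    calc ‖1 - conj z * w‖ = ‖conj (w - z) * w‖ := by rw [map_sub, sub_mul, hww]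
      _ = ‖w - z‖ := by rw [norm_mul, Complex.norm_conj, hw, mul_one]
  · rfl

theorem norm_reflectedFactor_zero (hz : z ≠ 0) :
    ‖reflectedFactor z 0‖ = ‖z‖ * Real.exp (logNeg ‖z‖) := by
  unfold reflectedFactor logNeg
  split_ifs with h
  · rw [max_eq_left (neg_nonneg.2 (Real.log_nonpos (norm_nonneg z) h.le)), Real.exp_neg,
      Real.exp_log (norm_pos_iff.2 hz), mul_inv_cancel₀ (norm_ne_zero_iff.2 hz)]
    simp
  · rw [max_eq_right (neg_nonpos.2 (Real.log_nonneg (not_lt.1 h)))]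
    simp

theorem reflectedFactor_ne_zero (hz : ‖z‖ ≠ 1) (hw : ‖w‖ ≤ 1) : reflectedFactor z w ≠ 0 := by
  unfold reflectedFactor
  split_ifs with h
  · have : ‖conj z * w‖ < 1 := by
      rw [norm_mul, Complex.norm_conj]
      nlinarith [norm_nonneg z, norm_nonneg w]
    intro h0
    rw [sub_eq_zero] at h0
    rw [← h0, norm_one] at this
    exact this.false
  · intro h0
    rw [sub_eq_zero] at h0
    subst h0
    exact hz (le_antisymm hw (not_lt.1 h))

end ReflectedFactor

section ReflectedProd

variable {Z Q : Multiset ℂ} {w : ℂ}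

noncomputable def reflectedProd (Z Q : Multiset ℂ) (w : ℂ) : ℂ :=
  (Z.map (reflectedFactor · w)).prod / (Q.map (reflectedFactor · w)).prod

theorem norm_reflectedProd_of_norm_eq_one (hw : ‖w‖ = 1) :
    ‖reflectedProd Z Q w‖ = ‖zeroPoleProd Z Q w‖ := by
  simp only [reflectedProd, zeroPoleProd, norm_div, norm_multiset_prod_map,
    norm_reflectedFactor_of_norm_eq_one hw]

theorem norm_reflectedProd_zero (hZ : 0 ∉ Z) (hQ : 0 ∉ Q) :
    ‖reflectedProd Z Q 0‖ = ‖zeroPoleProd Z Q 0‖ *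
      Real.exp ((Z.map (logNeg ‖·‖)).sum - (Q.map (logNeg ‖·‖)).sum) := by
  have key : ∀ M : Multiset ℂ, 0 ∉ M → (M.map (‖reflectedFactor · 0‖)).prod =
      (M.map (‖0 - ·‖)).prod * Real.exp ((M.map (logNeg ‖·‖)).sum) := by
    intro M hM
    rw [Real.exp_multiset_sum, Multiset.map_map, ← Multiset.prod_map_mul]
    refine congrArg _ (Multiset.map_congr rfl fun z hz => ?_)
    rw [norm_reflectedFactor_zero (ne_of_mem_of_not_mem hz hM), zero_sub, norm_neg]
    rfl
  simp only [reflectedProd, zeroPoleProd, norm_div, norm_multiset_prod_map, key Z hZ, key Q hQ,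
    Real.exp_sub, mul_div_mul_comm]

theorem differentiableOn_reflectedProd (Z : Multiset ℂ) (hQ : ∀ q ∈ Q, ‖q‖ ≠ 1) :
    DifferentiableOn ℂ (reflectedProd Z Q) (closedBall 0 1) := by
  have hd : ∀ M : Multiset ℂ, Differentiable ℂ fun w => (M.map (reflectedFactor · w)).prod :=
    fun M w => (HasFDerivAt.multiset_prod fun z _ =>
      (differentiable_reflectedFactor z w).hasFDerivAt).differentiableAt
  refine (hd Z).differentiableOn.div (hd Q).differentiableOn fun w hw => ?_
  rw [Ne, Multiset.prod_eq_zero_iff, Multiset.mem_map]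
  rintro ⟨q, hq, h0⟩
  exact reflectedFactor_ne_zero (hQ q hq) (by simpa using hw) h0

end ReflectedProd

section Jensen

variable {g : ℂ → ℂ} {Z Q : Multiset ℂ}

theorem exists_mem_sphere_norm_mul_exp_le (hg : DiffContOnCl ℂ g (ball 0 1)) (hZ : 0 ∉ Z)
    (hQ : 0 ∉ Q) (hQs : ∀ q ∈ Q, ‖q‖ ≠ 1) :
    ∃ w ∈ sphere (0 : ℂ) 1, ‖g 0 * zeroPoleProd Z Q 0‖ *
        Real.exp ((Z.map (logNeg ‖·‖)).sum - (Q.map (logNeg ‖·‖)).sum)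
      ≤ ‖g w * zeroPoleProd Z Q w‖ := by
  have hF : DiffContOnCl ℂ (fun w => g w * reflectedProd Z Q w) (ball 0 1) :=
    hg.smul (DifferentiableOn.diffContOnCl
      (by rw [closure_ball 0 one_ne_zero]; exact differentiableOn_reflectedProd Z hQs))
  obtain ⟨w, hw, hmax⟩ := Complex.exists_mem_frontier_isMaxOn_norm isBounded_ball
    ⟨0, mem_ball_self one_pos⟩ hF
  rw [frontier_ball 0 one_ne_zero] at hw
  refine ⟨w, hw, ?_⟩
  calc _ = ‖g 0 * reflectedProd Z Q 0‖ := by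
        rw [norm_mul, norm_mul, norm_reflectedProd_zero hZ hQ, mul_assoc]
    _ ≤ ‖g w * reflectedProd Z Q w‖ := hmax (subset_closure (mem_ball_self one_pos))
    _ = ‖g w * zeroPoleProd Z Q w‖ := by
        rw [norm_mul, norm_mul, norm_reflectedProd_of_norm_eq_one (by simpa using hw)]

theorem tendsto_log_norm_mul_zeroPoleProd_top {s : Set ℂ} {q : ℂ}
    (hg : ContinuousWithinAt g s q) (hgq : g q ≠ 0) (hqQ : q ∈ Q) (hqZ : q ∉ Z) :
    Tendsto (fun w => (Real.log ‖g w * zeroPoleProd Z Q w‖ : EReal)) (𝓝[s \ {q}] q) (𝓝 ⊤) := by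
  set num := fun w => g w * (Z.map (w - ·)).prod
  set den := fun w => (Q.map (w - ·)).prod
  have hnum : Tendsto (‖num ·‖) (𝓝[s \ {q}] q) (𝓝 ‖num q‖) :=
    ((hg.mono sdiff_subset).mul (continuous_prod_map_sub Z).continuousWithinAt).norm
  have hnum_pos : 0 < ‖num q‖ :=
    norm_pos_iff.2 (mul_ne_zero hgq (prod_map_sub_ne_zero_iff.2 hqZ))
  have hden : Tendsto (‖den ·‖) (𝓝[s \ {q}] q) (𝓝[>] 0) := by
    refine tendsto_nhdsWithin_iff.2 ⟨?_, ?_⟩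
    · have hq0 : den q = 0 := not_not.1 (mt prod_map_sub_ne_zero_iff.1 (not_not.2 hqQ))
      have h := ((continuous_prod_map_sub Q).norm.tendsto q).mono_left
        (nhdsWithin_le_nhds (s := s \ {q}))
      rwa [← norm_zero (E := ℂ), ← hq0]
    · filter_upwards [eventually_notMem_nhdsWithin_diff_singleton Q.finite_toSet s q] with w hw
      exact norm_pos_iff.2 (prod_map_sub_ne_zero_iff.2 hw)
  have hf : Tendsto (fun w => ‖num w‖ * ‖den w‖⁻¹) (𝓝[s \ {q}] q) atTop :=
    hnum.pos_mul_atTop hnum_pos (tendsto_inv_nhdsGT_zero.comp hden)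
  refine EReal.tendsto_coe_atTop.comp (Real.tendsto_log_atTop.comp (hf.congr fun w => ?_))
  dsimp only [Function.comp_apply, zeroPoleProd, num, den]
  rw [mul_div_assoc', norm_div, div_eq_mul_inv]

theorem le_iSup_sphere_diff_of_forall_notMem (hg : DiffContOnCl ℂ g (ball 0 1)) (hg0 : g 0 ≠ 0)
    (hgs : ∀ w ∈ sphere (0 : ℂ) 1, g w ≠ 0) (hZ : 0 ∉ Z) (hQ : 0 ∉ Q) (hZQ : ∀ q ∈ Q, q ∉ Z)
    {E : Set ℂ} (hE : E.Finite) :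
    ((Real.log ‖g 0 * zeroPoleProd Z Q 0‖
        + ((Z.map (logNeg ‖·‖)).sum - (Q.map (logNeg ‖·‖)).sum) : ℝ) : EReal)
      ≤ ⨆ w ∈ sphere (0 : ℂ) 1 \ E, (Real.log ‖g w * zeroPoleProd Z Q w‖ : EReal) := by
  have hgc : ContinuousOn g (sphere 0 1) :=
    hg.continuousOn.mono (by rw [closure_ball 0 one_ne_zero]; exact sphere_subset_closedBall)
  by_cases hQs : ∃ q ∈ Q, ‖q‖ = 1
  · obtain ⟨q, hqQ, hq⟩ := hQs
    have hqs : q ∈ sphere (0 : ℂ) 1 := by simpa using hq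
    exact le_top.trans <| preperfect_sphere_zero_one.le_iSup_diff_of_tendsto hE hqs <|
      tendsto_log_norm_mul_zeroPoleProd_top (hgc q hqs) (hgs q hqs) hqQ (hZQ q hqQ)
  push Not at hQs
  obtain ⟨w, hw, hle⟩ := exists_mem_sphere_norm_mul_exp_le hg hZ hQ hQs
  have hf0 : 0 < ‖g 0 * zeroPoleProd Z Q 0‖ := norm_pos_iff.2 <| mul_ne_zero hg0 <|
    div_ne_zero (prod_map_sub_ne_zero_iff.2 hZ) (prod_map_sub_ne_zero_iff.2 hQ)
  have hfw : 0 < ‖g w * zeroPoleProd Z Q w‖ := (mul_pos hf0 (Real.exp_pos _)).trans_le hle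
  have hwQ : w ∉ Q := fun h => hQs w h (by simpa using hw)
  have hcont : ContinuousWithinAt (fun w => g w * zeroPoleProd Z Q w) (sphere 0 1) w :=
    (hgc w hw).mul (continuousAt_zeroPoleProd hwQ).continuousWithinAt
  calc _ = (Real.log (‖g 0 * zeroPoleProd Z Q 0‖ *
          Real.exp ((Z.map (logNeg ‖·‖)).sum - (Q.map (logNeg ‖·‖)).sum)) : EReal) := by
        rw [Real.log_mul hf0.ne' (Real.exp_pos _).ne', Real.log_exp]
    _ ≤ (Real.log ‖g w * zeroPoleProd Z Q w‖ : EReal) :=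
        EReal.coe_le_coe_iff.2 (Real.log_le_log (by positivity) hle)
    _ ≤ _ := preperfect_sphere_zero_one.le_iSup_diff_of_tendsto hE hw <|
        (continuous_coe_real_ereal.continuousAt.comp_continuousWithinAt
          (hcont.norm.log hfw.ne')).tendsto.mono_left (nhdsWithin_mono w sdiff_subset)

theorem log_norm_add_sum_logNeg_le_iSup_sphere (hg : DiffContOnCl ℂ g (ball 0 1))
    (hg0 : g 0 ≠ 0) (hgs : ∀ w ∈ sphere (0 : ℂ) 1, g w ≠ 0) (hZ : 0 ∉ Z) (hQ : 0 ∉ Q) :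
    ((Real.log ‖g 0 * zeroPoleProd Z Q 0‖
        + ((Z.map (logNeg ‖·‖)).sum - (Q.map (logNeg ‖·‖)).sum) : ℝ) : EReal)
      ≤ ⨆ w ∈ sphere (0 : ℂ) 1, (Real.log ‖g w * zeroPoleProd Z Q w‖ : EReal) := by
  have hsub : ∀ {M N : Multiset ℂ}, 0 ∉ M → 0 ∉ M - N :=
    fun hM h => hM (Multiset.mem_of_le tsub_le_self h)
  have hdisj : ∀ q ∈ Q - Z, q ∉ Z - Q := by
    intro q hq hq'
    rw [Multiset.mem_sub] at hq hq'
    omega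
  -- cancelling common zeros and poles changes `zeroPoleProd` only on `Q`, where `x / 0 = 0`
  have h := le_iSup_sphere_diff_of_forall_notMem hg hg0 hgs (hsub hZ) (hsub hQ) hdisj
    Q.finite_toSet
  rw [zeroPoleProd_sub_sub hQ, Multiset.sum_map_sub_sub_sum_map_sub] at h
  refine h.trans (iSup₂_mono' fun w hw => ⟨w, hw.1, ?_⟩)
  rw [zeroPoleProd_sub_sub hw.2]

end Jensen

section Moebius

variable {α β γ δ : ℂ}

noncomputable def moebiusInv (α β γ δ w : ℂ) : ℂ := (δ * w - β) / (α - γ * w)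

/-- Points at the pole `-δ / γ` are dropped: the Möbius map sends them to `∞`. -/
noncomputable def moebiusImage (α β γ δ : ℂ) (T : Multiset ℂ) : Multiset ℂ :=
  (T.filter (γ * · + δ ≠ 0)).map fun t => (α * t + β) / (γ * t + δ)

theorem sub_mul_ne_zero_of_norm_le_one (hdet : α * δ - β * γ ≠ 0)
    (hbounded : γ = 0 ∨ ‖γ‖ < ‖α‖) {w : ℂ} (hw : ‖w‖ ≤ 1) : α - γ * w ≠ 0 := by
  rcases hbounded with rfl | h
  · rintro h0
    simp_all
  · intro h0
    rw [sub_eq_zero] at h0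
    have : ‖α‖ ≤ ‖γ‖ := by
      rw [h0, norm_mul]
      exact mul_le_of_le_one_right (norm_nonneg _) hw
    linarith

theorem moebius_moebiusInv (hdet : α * δ - β * γ ≠ 0) {w : ℂ} (hw : α - γ * w ≠ 0) :
    (α * moebiusInv α β γ δ w + β) / (γ * moebiusInv α β γ δ w + δ) = w := by
  have hv : moebiusInv α β γ δ w * (α - γ * w) = δ * w - β := div_mul_cancel₀ _ hw
  have hden : γ * moebiusInv α β γ δ w + δ = (α * δ - β * γ) / (α - γ * w) := by
    rw [eq_div_iff hw]; linear_combination γ * hv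
  have hnum : α * moebiusInv α β γ δ w + β = (α * δ - β * γ) * w / (α - γ * w) := by
    rw [eq_div_iff hw]; linear_combination α * hv
  rw [hden, hnum, div_div_div_cancel_right₀ hw, mul_div_cancel_left₀ _ hdet]

theorem moebiusInv_zero {a : ℂ} (hα : α ≠ 0) (ha : α * a + β = 0) :
    moebiusInv α β γ δ 0 = a := by
  rw [moebiusInv, mul_zero, zero_sub, mul_zero, sub_zero, div_eq_iff hα]
  linear_combination -ha

theorem iSup_sphere_le_iSup_norm_moebius_eq_one {ι : Type*} [CompleteLattice ι]
    (hdet : α * δ - β * γ ≠ 0) (hbounded : γ = 0 ∨ ‖γ‖ < ‖α‖) {f φ : ℂ → ι}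
    (hf : ∀ w ∈ sphere (0 : ℂ) 1, f w = φ (moebiusInv α β γ δ w)) :
    ⨆ w ∈ sphere (0 : ℂ) 1, f w ≤ ⨆ z ∈ {z : ℂ | ‖(α * z + β) / (γ * z + δ)‖ = 1}, φ z := by
  refine iSup₂_mono' fun w hw => ⟨moebiusInv α β γ δ w, ?_, (hf w hw).le⟩
  have hw1 := mem_sphere_zero_iff_norm.1 hw
  rw [mem_ofPred_eq, moebius_moebiusInv hdet (sub_mul_ne_zero_of_norm_le_one hdet hbounded hw1.le),
    hw1]

theorem moebiusInv_sub_mul {w : ℂ} (hw : α - γ * w ≠ 0) (t : ℂ) :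
    (moebiusInv α β γ δ w - t) * (α - γ * w) = (γ * t + δ) * w - (α * t + β) := by
  have hv : moebiusInv α β γ δ w * (α - γ * w) = δ * w - β := div_mul_cancel₀ _ hw
  linear_combination hv

theorem exists_prod_map_moebiusInv_sub_mul_pow (T : Multiset ℂ) :
    ∃ K : ℂ, ∀ w, α - γ * w ≠ 0 →
      (T.map (moebiusInv α β γ δ w - ·)).prod * (α - γ * w) ^ Multiset.card T =
        K * ((moebiusImage α β γ δ T).map (w - ·)).prod := by
  induction T using Multiset.induction_on with
  | empty => exact ⟨1, by simp [moebiusImage]⟩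
  | cons t T ih =>
    obtain ⟨K, hK⟩ := ih
    simp only [moebiusImage] at hK ⊢
    by_cases ht : γ * t + δ = 0
    · refine ⟨-(α * t + β) * K, fun w hw => ?_⟩
      have h := moebiusInv_sub_mul (β := β) (δ := δ) hw t
      rw [ht, zero_mul, zero_sub] at h
      rw [Multiset.filter_cons_of_neg T (not_not.2 ht), Multiset.map_cons, Multiset.prod_cons,
        Multiset.card_cons, pow_succ]
      linear_combination ((T.map (moebiusInv α β γ δ w - ·)).prod * (α - γ * w) ^ T.card) * h
        - (α * t + β) * hK w hw
    · refine ⟨(γ * t + δ) * K, fun w hw => ?_⟩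
      have h := moebiusInv_sub_mul (β := β) (δ := δ) hw t
      have hu : (γ * t + δ) * ((α * t + β) / (γ * t + δ)) = α * t + β := mul_div_cancel₀ _ ht
      simp only [Multiset.filter_cons_of_pos (p := (γ * · + δ ≠ 0)) T ht, Multiset.map_cons,
        Multiset.prod_cons, Multiset.card_cons, pow_succ]
      linear_combination ((T.map (moebiusInv α β γ δ w - ·)).prod * (α - γ * w) ^ T.card) * h
        + ((γ * t + δ) * w - (α * t + β)) * hK w hw
        + K * (((T.filter (γ * · + δ ≠ 0)).map fun t => (α * t + β) / (γ * t + δ)).map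
          (w - ·)).prod * hu

theorem exists_eval_moebiusInv_mul_pow (p : ℂ[X]) : ∃ K : ℂ, ∀ w, α - γ * w ≠ 0 →
    p.eval (moebiusInv α β γ δ w) * (α - γ * w) ^ p.natDegree =
      K * ((moebiusImage α β γ δ p.roots).map (w - ·)).prod := by
  obtain ⟨K, hK⟩ := exists_prod_map_moebiusInv_sub_mul_pow (α := α) (β := β) (γ := γ) (δ := δ)
    p.roots
  refine ⟨p.leadingCoeff * K, fun w hw => ?_⟩
  rw [(IsAlgClosed.splits p).eval_eq_prod_roots, ← IsAlgClosed.card_roots_eq_natDegree,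
    mul_assoc, hK w hw, mul_assoc]

theorem exists_eval_div_eval_moebiusInv (c : ℂ) {p q : ℂ[X]} (hqp : q.natDegree ≤ p.natDegree) :
    ∃ K : ℂ, ∀ w, α - γ * w ≠ 0 →
      q.eval (moebiusInv α β γ δ w) / (c * p.eval (moebiusInv α β γ δ w)) =
        K * (α - γ * w) ^ (p.natDegree - q.natDegree) *
          zeroPoleProd (moebiusImage α β γ δ q.roots) (moebiusImage α β γ δ p.roots) w := by
  obtain ⟨Kp, hKp⟩ := exists_eval_moebiusInv_mul_pow (α := α) (β := β) (γ := γ) (δ := δ) p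
  obtain ⟨Kq, hKq⟩ := exists_eval_moebiusInv_mul_pow (α := α) (β := β) (γ := γ) (δ := δ) q
  refine ⟨Kq / (c * Kp), fun w hw => ?_⟩
  have hP := hKp w hw
  have hQ := hKq w hw
  rw [← Nat.add_sub_of_le hqp] at hP
  rw [← eq_div_iff (pow_ne_zero _ hw)] at hP hQ
  rw [hP, hQ, pow_add, zeroPoleProd]
  generalize α - γ * w = A at hw ⊢
  field_simp

/-- On the right, the pole contributes `logNeg ‖x / 0‖ = logNeg 0 = 0`. -/
theorem sum_map_logNeg_moebiusImage (T : Multiset ℂ) :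
    ((moebiusImage α β γ δ T).map (logNeg ‖·‖)).sum =
      (T.map fun t => logNeg ‖(α * t + β) / (γ * t + δ)‖).sum := by
  conv_rhs => rw [← Multiset.filter_add_not (γ * · + δ ≠ 0) T]
  rw [Multiset.map_add, Multiset.sum_add, moebiusImage, Multiset.map_map, Function.comp_def,
    left_eq_add]
  refine Multiset.sum_eq_zero fun x hx => ?_
  obtain ⟨t, ht, rfl⟩ := Multiset.mem_map.1 hx
  rw [Multiset.mem_filter, not_not] at ht
  simp [ht.2, logNeg]

end Moebius

theorem jensen_inequality_roots_general
    (k : ℕ)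
    (P : Polynomial ℂ)
    (α β γ δ : ℂ) (hdet : α * δ - β * γ ≠ 0)
    (hbounded : γ = 0 ∨ ‖γ‖ < ‖α‖)
    (a : ℂ) (ha0 : α * a + β = 0)
    (hPa : P.eval a ≠ 0) (hPka : (derivative^[k] P).eval a ≠ 0) :
    let u : ℂ → ℂ := fun z => (α * z + β) / (γ * z + δ)
    let S : ℂ → ℂ := fun z => (derivative^[k] P).eval z / ((k.factorial : ℂ) * P.eval z)
    ((((derivative^[k] P).roots.map (fun ρ => logNeg ‖u ρ‖)).sum
        - ((P.roots.map (fun ζ => logNeg ‖u ζ‖)).sum) : ℝ) : EReal)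
      ≤ (⨆ z ∈ {z : ℂ | ‖u z‖ = 1}, ((Real.log ‖S z‖ : EReal)))
        - ((Real.log ‖S a‖ : EReal)) := by
  intro u S
  have hA : ∀ w : ℂ, ‖w‖ ≤ 1 → α - γ * w ≠ 0 := fun w =>
    sub_mul_ne_zero_of_norm_le_one hdet hbounded
  obtain ⟨K, hK⟩ := exists_eval_div_eval_moebiusInv (α := α) (β := β) (γ := γ) (δ := δ)
    (k.factorial : ℂ) ((natDegree_iterate_derivative P k).trans (tsub_le_self (b := k)))
  set g : ℂ → ℂ := fun w => K * (α - γ * w) ^ (P.natDegree - (derivative^[k] P).natDegree)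
  set Z := moebiusImage α β γ δ (derivative^[k] P).roots
  set Q := moebiusImage α β γ δ P.roots
  have hSa : S a = g 0 * zeroPoleProd Z Q 0 := by
    rw [← moebiusInv_zero (γ := γ) (δ := δ) (by simpa using hA 0 (by simp)) ha0]
    exact hK 0 (hA 0 (by simp))
  have hf0 : g 0 * zeroPoleProd Z Q 0 ≠ 0 := hSa ▸
    div_ne_zero hPka (mul_ne_zero (Nat.cast_ne_zero.2 k.factorial_ne_zero) hPa)
  obtain ⟨hZ, hQ⟩ := div_ne_zero_iff.1 (right_ne_zero_of_mul hf0)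
  have hgs : ∀ w ∈ sphere (0 : ℂ) 1, g w ≠ 0 := fun w hw =>
    mul_ne_zero (left_ne_zero_of_mul (left_ne_zero_of_mul hf0))
      (pow_ne_zero _ (hA w (mem_sphere_zero_iff_norm.1 hw).le))
  have key := log_norm_add_sum_logNeg_le_iSup_sphere
    (by fun_prop : Differentiable ℂ g).diffContOnCl (left_ne_zero_of_mul hf0) hgs
    (prod_map_sub_ne_zero_iff.1 hZ) (prod_map_sub_ne_zero_iff.1 hQ)
  rw [← hSa, sum_map_logNeg_moebiusImage, sum_map_logNeg_moebiusImage] at key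
  refine EReal.coe_le_sub_coe_iff.2
    (key.trans (iSup_sphere_le_iSup_norm_moebius_eq_one hdet hbounded fun w hw => ?_))
  simp only [S, g, hK w (hA w (mem_sphere_zero_iff_norm.1 hw).le)]

/-- Jensen-type inequality.  For a monic `P` of degree `n`, `1 ≤ k < n`,
`S = P^{(k)}/(k! P)` and a Möbius map `u` whose preimage of the unit disk is a bounded
disk, with `a = u⁻¹(0)` neither a zero of `P` nor of `P^{(k)}`,
`Σ_ρ log⁻|u(ρ)| − Σ_ζ log⁻|u(ζ)| ≤ log sup_{|u(z)|=1} |S(z)| − log |S(a)|`,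
the sums running over roots of `P^{(k)}` resp. `P` with multiplicity, the right-hand
side being an extended real. -/
theorem jensen_inequality_roots
    (n k : ℕ) (hn : 1 ≤ n) (hk1 : 1 ≤ k) (hkn : k < n)
    (P : Polynomial ℂ) (hmonic : P.Monic) (hdeg : P.natDegree = n)
    (α β γ δ : ℂ) (hdet : α * δ - β * γ ≠ 0)
    (hbounded : γ = 0 ∨ ‖γ‖ < ‖α‖)
    (a : ℂ) (ha0 : α * a + β = 0) (ha1 : γ * a + δ ≠ 0)
    (hPa : P.eval a ≠ 0) (hPka : (derivative^[k] P).eval a ≠ 0) :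
    let u : ℂ → ℂ := fun z => (α * z + β) / (γ * z + δ)
    let S : ℂ → ℂ := fun z => (derivative^[k] P).eval z / ((k.factorial : ℂ) * P.eval z)
    ((((derivative^[k] P).roots.map (fun ρ => logNeg ‖u ρ‖)).sum
        - ((P.roots.map (fun ζ => logNeg ‖u ζ‖)).sum) : ℝ) : EReal)
      ≤ (⨆ z ∈ {z : ℂ | ‖u z‖ = 1}, ((Real.log ‖S z‖ : EReal)))
        - ((Real.log ‖S a‖ : EReal)) :=
  jensen_inequality_roots_general k P α β γ δ hdet hbounded a ha0 hPa hPka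
end

section
/- Let μ be any probability measure on ℂ, let ξ_1, ξ_2, … be i.i.d. with law μ, and let P_n(z) = ∏_{j=1}^n (z−ξ_j). Let (k_n) be integers with 1 ≤ k_n < n and (k_n log n)/n → 0. Then for every ε > 0 and for Lebesgue-almost every (a, r) ∈ ℂ × (0,∞): almost surely, for all sufficiently large n, |P_n^{(k_n)}(z)| ≤ e^{ε n} · k_n! · |P_n(z)| for every z on the circle {z : |z−a| = r}. -/
open MeasureTheory ProbabilityTheory Polynomial Filter Topology
open scoped ENNReal
open Metric

theorem norm_eval_iterate_derivative_prod_X_sub_C_mul_pow_le {𝕜 ι : Type*} [NormedField 𝕜]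
    [DecidableEq ι] {c : ι → 𝕜} {z : 𝕜} {δ : ℝ} (hδ : 0 ≤ δ) (k : ℕ) (s : Finset ι)
    (hfar : ∀ j ∈ s, δ ≤ ‖z - c j‖) :
    ‖(derivative^[k] (∏ j ∈ s, (X - C (c j)))).eval z‖ * δ ^ k ≤
      s.card.descFactorial k * ‖(∏ j ∈ s, (X - C (c j))).eval z‖ := by
  induction k generalizing s with
  | zero => simp
  | succ k ih =>
    have hterm : ∀ b ∈ s,
        ‖(derivative^[k] (∏ j ∈ s.erase b, (X - C (c j)))).eval z‖ * δ ^ (k + 1) ≤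
          (s.card - 1).descFactorial k * ‖(∏ j ∈ s, (X - C (c j))).eval z‖ := by
      intro b hb
      have hrest := ih (s.erase b) fun j hj => hfar j (Finset.mem_of_mem_erase hj)
      rw [Finset.card_erase_of_mem hb] at hrest
      have hfactor : ‖(∏ j ∈ s, (X - C (c j))).eval z‖ =
          ‖z - c b‖ * ‖(∏ j ∈ s.erase b, (X - C (c j))).eval z‖ := by
        rw [← Finset.mul_prod_erase s _ hb, eval_mul, norm_mul]
        simp
      calc _ = ‖(derivative^[k] (∏ j ∈ s.erase b, (X - C (c j)))).eval z‖ * δ ^ k * δ := by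
            ring
        _ ≤ (s.card - 1).descFactorial k * ‖(∏ j ∈ s.erase b, (X - C (c j))).eval z‖ *
              ‖z - c b‖ := mul_le_mul hrest (hfar b hb) hδ (by positivity)
        _ = _ := by rw [hfactor]; ring
    calc ‖(derivative^[k + 1] (∏ j ∈ s, (X - C (c j)))).eval z‖ * δ ^ (k + 1)
        ≤ ∑ b ∈ s, ‖(derivative^[k] (∏ j ∈ s.erase b, (X - C (c j)))).eval z‖ * δ ^ (k + 1) := by
          rw [Function.iterate_succ_apply, derivative_prod_finset, ← Finset.sum_mul]
          simp only [derivative_sub, derivative_X, derivative_C, sub_zero, mul_one,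
            iterate_derivative_sum, eval_finsetSum]
          gcongr
          exact norm_sum_le _ _
      _ ≤ ∑ b ∈ s, ((s.card - 1).descFactorial k : ℝ) * ‖(∏ j ∈ s, (X - C (c j))).eval z‖ :=
          Finset.sum_le_sum hterm
      _ = _ := by
          rw [Finset.sum_const, nsmul_eq_mul, ← mul_assoc]
          rcases s.card with _ | n
          · simp
          · rw [Nat.succ_descFactorial_succ, Nat.add_sub_cancel]; push_cast; ring

theorem norm_eval_iterate_derivative_prod_X_sub_C_le {𝕜 ι : Type*} [NormedField 𝕜]
    [DecidableEq ι] {c : ι → 𝕜} {z : 𝕜} {δ : ℝ} (hδ : 0 < δ) (k : ℕ) (s : Finset ι)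
    (hfar : ∀ j ∈ s, δ ≤ ‖z - c j‖) :
    ‖(derivative^[k] (∏ j ∈ s, (X - C (c j)))).eval z‖ ≤
      (s.card / δ) ^ k * ‖(∏ j ∈ s, (X - C (c j))).eval z‖ := by
  rw [div_pow, div_mul_eq_mul_div, le_div_iff₀ (by positivity)]
  calc ‖(derivative^[k] (∏ j ∈ s, (X - C (c j)))).eval z‖ * δ ^ k
      ≤ s.card.descFactorial k * ‖(∏ j ∈ s, (X - C (c j))).eval z‖ :=
        norm_eval_iterate_derivative_prod_X_sub_C_mul_pow_le hδ.le k s hfar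
    _ ≤ _ := by
        gcongr
        exact_mod_cast Nat.descFactorial_le_pow _ _

def annulus {E : Type*} [SeminormedAddCommGroup E] (a : E) (r t : ℝ) : Set E :=
  (fun z => ‖z - a‖) ⁻¹' closedBall r t

theorem measurableSet_annulus {E : Type*} [SeminormedAddCommGroup E] [MeasurableSpace E]
    [OpensMeasurableSpace E] (a : E) (r t : ℝ) : MeasurableSet (annulus a r t) :=
  (continuous_id.sub continuous_const).norm.measurable measurableSet_closedBall

theorem lt_norm_sub_of_notMem_annulus {E : Type*} [SeminormedAddCommGroup E] {a z w : E}
    {t : ℝ} (hw : w ∉ annulus a ‖z - a‖ t) : t < ‖z - w‖ := by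
  have hfar : t < |‖w - a‖ - ‖z - a‖| := by
    simpa [annulus, Real.dist_eq] using hw
  calc t < |‖w - a‖ - ‖z - a‖| := hfar
    _ ≤ ‖(w - a) - (z - a)‖ := abs_norm_sub_norm_le _ _
    _ = ‖z - w‖ := by rw [sub_sub_sub_cancel_right, norm_sub_rev]

theorem lintegral_measure_closedBall (ν : Measure ℝ) [SFinite ν] (t : ℝ) :
    ∫⁻ r, ν (closedBall r t) = ENNReal.ofReal (2 * t) * ν Set.univ := by
  have hS : MeasurableSet {q : ℝ × ℝ | dist q.2 q.1 ≤ t} :=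
    measurableSet_le (continuous_snd.dist continuous_fst).measurable measurable_const
  calc ∫⁻ r, ν (closedBall r t) = (volume.prod ν) {q : ℝ × ℝ | dist q.2 q.1 ≤ t} :=
        (Measure.prod_apply hS).symm
    _ = ∫⁻ x, volume (closedBall x t) ∂ν := by
        rw [Measure.prod_apply_symm hS]
        refine lintegral_congr fun x => congrArg volume ?_
        ext r
        simp [dist_comm]
    _ = ENNReal.ofReal (2 * t) * ν Set.univ := by
        simp [Real.volume_closedBall]

section
variable {E : Type*} [NormedAddCommGroup E] [MeasurableSpace E] [BorelSpace E]
  [SecondCountableTopology E]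

theorem measurable_measure_annulus (μ : Measure E) [SFinite μ] (t : ℝ) :
    Measurable fun p : E × ℝ => μ (annulus p.1 p.2 t) :=
  measurable_measure_prodMk_left <| measurableSet_le
    ((continuous_snd.sub continuous_fst.fst).norm.dist continuous_fst.snd).measurable
    measurable_const

theorem ae_tsum_mul_measure_annulus_lt_top (μ : Measure E) [IsFiniteMeasure μ]
    (ρ : Measure E) [SFinite ρ] {t : ℕ → ℝ} (ht0 : ∀ n, 0 ≤ t n)
    (ht : Summable fun n : ℕ => n * t n) :
    ∀ᵐ p ∂ρ.prod volume, ∑' n : ℕ, n * μ (annulus p.1 p.2 (t n)) < ∞ := by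
  have hmeas : Measurable fun p : E × ℝ => ∑' n : ℕ, n * μ (annulus p.1 p.2 (t n)) :=
    Measurable.tsum fun n => (measurable_measure_annulus μ (t n)).const_mul _
  rw [Measure.ae_prod_iff_ae_ae (measurableSet_lt hmeas measurable_const)]
  refine Eventually.of_forall fun a => ae_lt_top (hmeas.comp measurable_prodMk_left) ?_
  have hslice_meas : ∀ n, Measurable fun r => μ (annulus a r (t n)) :=
    fun n => (measurable_measure_annulus μ (t n)).comp measurable_prodMk_left
  have hslice : ∀ n, ∫⁻ r, μ (annulus a r (t n)) = ENNReal.ofReal (2 * t n) * μ Set.univ := by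
    intro n
    have hg : Measurable fun z : E => ‖z - a‖ := (measurable_id.sub_const a).norm
    simp_rw [annulus, ← Measure.map_apply hg measurableSet_closedBall,
      lintegral_measure_closedBall, Measure.map_apply hg MeasurableSet.univ, Set.preimage_univ]
  calc ∫⁻ r, ∑' n : ℕ, n * μ (annulus a r (t n))
      = ∑' n : ℕ, n * (ENNReal.ofReal (2 * t n) * μ Set.univ) := by
        rw [lintegral_tsum fun n => ((hslice_meas n).const_mul _).aemeasurable]
        simp_rw [lintegral_const_mul _ (hslice_meas _), hslice]
    _ = ENNReal.ofReal (∑' n : ℕ, n * t n) * (2 * μ Set.univ) := by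
        rw [ENNReal.ofReal_tsum_of_nonneg (fun n => mul_nonneg n.cast_nonneg (ht0 n)) ht,
          ← ENNReal.tsum_mul_right]
        refine tsum_congr fun n => ?_
        rw [ENNReal.ofReal_mul n.cast_nonneg, ENNReal.ofReal_mul zero_le_two,
          ENNReal.ofReal_natCast, ENNReal.ofReal_ofNat]
        ring
    _ ≠ ∞ := ENNReal.mul_ne_top ENNReal.ofReal_ne_top
        (ENNReal.mul_ne_top ENNReal.ofNat_ne_top (measure_ne_top μ _))

end

theorem ae_eventually_forall_lt_notMem {Ω α : Type*} [MeasurableSpace Ω] [MeasurableSpace α]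
    {P : Measure Ω} {μ : Measure α} {ξ : ℕ → Ω → α} (hmeas : ∀ i, Measurable (ξ i))
    (hdist : ∀ i, P.map (ξ i) = μ) {A : ℕ → Set α} (hA : ∀ n, MeasurableSet (A n))
    (hsum : ∑' n : ℕ, n * μ (A n) ≠ ∞) :
    ∀ᵐ ω ∂P, ∀ᶠ n in atTop, ∀ j < n, ξ j ω ∉ A n := by
  have hbound : ∀ n, P {ω | ∃ j < n, ξ j ω ∈ A n} ≤ n * μ (A n) := fun n =>
    calc P {ω | ∃ j < n, ξ j ω ∈ A n} = P (⋃ j ∈ Finset.range n, ξ j ⁻¹' A n) := by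
          congr 1; ext; simp [Set.mem_iUnion]
      _ ≤ ∑ j ∈ Finset.range n, P (ξ j ⁻¹' A n) := measure_biUnion_finset_le _ _
      _ = n * μ (A n) := by
          simp_rw [← Measure.map_apply (hmeas _) (hA n), hdist, Finset.sum_const, Finset.card_range,
            nsmul_eq_mul]
  filter_upwards [ae_eventually_notMem (ne_top_of_le_ne_top hsum (ENNReal.tsum_le_tsum hbound))]
    with ω hω
  filter_upwards [hω] with n hn j hj hmem
  exact hn ⟨j, hj, hmem⟩

theorem eventually_pow_mul_le_exp {k : ℕ → ℕ}
    (hk : Tendsto (fun n => (k n : ℝ) * Real.log n / n) atTop (𝓝 0)) (m : ℕ) {ε : ℝ}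
    (hε : 0 < ε) : ∀ᶠ n : ℕ in atTop, (n : ℝ) ^ (m * k n) ≤ Real.exp (ε * n) := by
  have hsmall : ∀ᶠ n : ℕ in atTop, m * ((k n : ℝ) * Real.log n / n) < ε := by
    simpa using (hk.const_mul (m : ℝ)).eventually (gt_mem_nhds (by simpa using hε))
  filter_upwards [hsmall, eventually_gt_atTop 0] with n hn hpos
  have hn' : (0 : ℝ) < n := by exact_mod_cast hpos
  rw [mul_div_assoc', div_lt_iff₀ hn'] at hn
  calc (n : ℝ) ^ (m * k n) = Real.exp ((m * k n : ℕ) * Real.log n) := by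
        rw [Real.exp_nat_mul, Real.exp_log hn']
    _ ≤ Real.exp (ε * n) := by
        rw [Real.exp_le_exp]
        push_cast
        linarith

theorem upper_bound_on_circles_general
    {Ω : Type*} [MeasureSpace Ω]
    (μ : Measure ℂ) [IsProbabilityMeasure μ]
    (ξ : ℕ → Ω → ℂ) (hmeas : ∀ i, Measurable (ξ i))
    (hdist : ∀ i, Measure.map (ξ i) ℙ = μ)
    (k : ℕ → ℕ)
    (hko : Tendsto (fun n => (k n : ℝ) * Real.log n / n) atTop (𝓝 0)) :
    ∀ ε : ℝ, 0 < ε → ∀ᵐ p ∂(volume : Measure (ℂ × ℝ)), 0 < p.2 →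
      ∀ᵐ ω ∂ℙ, ∀ᶠ n in atTop, ∀ z : ℂ, ‖z - p.1‖ = p.2 →
        ‖(derivative^[k n] (Pn ξ n ω)).eval z‖ ≤
          Real.exp (ε * n) * (k n).factorial * ‖(Pn ξ n ω).eval z‖ := by
  intro ε hε
  have hwidths : Summable fun n : ℕ => (n : ℝ) * ((n : ℝ) ^ 3)⁻¹ := by
    refine (Real.summable_nat_pow_inv.mpr one_lt_two).congr fun n => ?_
    rcases n.eq_zero_or_pos with rfl | hn
    · simp
    · field_simp
  filter_upwards [Measure.volume_eq_prod ℂ ℝ ▸ ae_tsum_mul_measure_annulus_lt_top μ volume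
    (fun n => by positivity) hwidths] with p hp _
  filter_upwards [ae_eventually_forall_lt_notMem hmeas hdist
    (fun n => measurableSet_annulus p.1 p.2 _) hp.ne] with ω hω
  filter_upwards [hω, eventually_pow_mul_le_exp hko 4 hε, eventually_gt_atTop 0]
    with n hfar hexp hn z hz
  have hroots : ∀ j ∈ Finset.range n, ((n : ℝ) ^ 3)⁻¹ ≤ ‖z - ξ j ω‖ := fun j hj =>
    (lt_norm_sub_of_notMem_annulus (hz ▸ hfar j (Finset.mem_range.mp hj))).le
  calc ‖(derivative^[k n] (Pn ξ n ω)).eval z‖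
      ≤ (n / ((n : ℝ) ^ 3)⁻¹) ^ k n * ‖(Pn ξ n ω).eval z‖ := by
        simpa only [Pn, Finset.card_range] using
          norm_eval_iterate_derivative_prod_X_sub_C_le (by positivity) (k n) _ hroots
    _ = (n : ℝ) ^ (4 * k n) * ‖(Pn ξ n ω).eval z‖ := by
        rw [div_inv_eq_mul, ← pow_succ', pow_mul]
    _ ≤ Real.exp (ε * n) * 1 * ‖(Pn ξ n ω).eval z‖ := by
        rw [mul_one]; gcongr
    _ ≤ Real.exp (ε * n) * (k n).factorial * ‖(Pn ξ n ω).eval z‖ := by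
        gcongr
        exact_mod_cast (k n).factorial_pos

/-- upper bound.  For any probability measure `μ`, i.i.d. roots, derivative
orders `k_n` with `(k_n log n)/n → 0`, every `ε > 0` and Lebesgue-a.e. circle
`{|z-a| = r}`: almost surely, eventually in `n`,
`|P_n^{(k_n)}(z)| ≤ e^{εn} k_n! |P_n(z)|` on the whole circle. -/
theorem upper_bound_on_circles
    {Ω : Type*} [MeasureSpace Ω] [IsProbabilityMeasure (ℙ : Measure Ω)]
    (μ : Measure ℂ) [IsProbabilityMeasure μ]
    (ξ : ℕ → Ω → ℂ) (hmeas : ∀ i, Measurable (ξ i))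
    (hindep : iIndepFun ξ ℙ)
    (hdist : ∀ i, Measure.map (ξ i) ℙ = μ)
    (k : ℕ → ℕ) (hk : ∀ n, 2 ≤ n → 1 ≤ k n ∧ k n < n)
    (hko : Tendsto (fun n => (k n : ℝ) * Real.log n / n) atTop (𝓝 0)) :
    ∀ ε : ℝ, 0 < ε → ∀ᵐ p ∂(volume : Measure (ℂ × ℝ)), 0 < p.2 →
      ∀ᵐ ω ∂ℙ, ∀ᶠ n in atTop, ∀ z : ℂ, ‖z - p.1‖ = p.2 →
        ‖(derivative^[k n] (Pn ξ n ω)).eval z‖ ≤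
          Real.exp (ε * n) * (k n).factorial * ‖(Pn ξ n ω).eval z‖ :=
  upper_bound_on_circles_general μ ξ hmeas hdist k hko
end

section
/- Let R > 0, q > 0, r₀ ∈ (0,1), let ν be a finite Borel measure on ℂ supported in the closed disk D(0,R), and suppose ν(D(x,r)) ≤ r^q for all x ∈ ℂ and all r ∈ (0, r₀). Let a ∈ ℂ. Then there exist constants C > 0 and γ₀ > 0 (depending only on a, R, q, r₀) such that for all γ ∈ (0, γ₀) and all w ∈ ℂ, ν({ x ∈ ℂ : x ≠ a and |1/(a−x) − w| ≤ γ }) ≤ C·γ^q. -/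
open MeasureTheory Filter Topology
open scoped ENNReal

/-! The inversion `x ↦ (a - x)⁻¹` distorts distances on the disk `‖x‖ ≤ R` by a factor at most
`(‖a‖ + R)²`, because `‖u - v‖ = ‖u‖ ‖v‖ ‖u⁻¹ - v⁻¹‖`. Hence the part of the preimage of a
`γ`-disk that carries mass lies in a single ball of radius `3 (‖a‖ + R)² γ`, and the Frostman
bound for that ball gives `C γ^q` with `C = (3 (‖a‖ + R)²)^q`. -/

lemma measure_le_of_forall_dist_lt {X : Type*} [PseudoMetricSpace X] [MeasurableSpace X]
    {ν : Measure X} {s : Set X} {r : ℝ} {b : ℝ≥0∞}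
    (hball : ∀ x ∈ s, ν (Metric.ball x r) ≤ b) (hs : ∀ x ∈ s, ∀ y ∈ s, dist x y < r) :
    ν s ≤ b := by
  rcases s.eq_empty_or_nonempty with rfl | ⟨x, hx⟩
  · simp
  · exact (measure_mono fun y hy => Metric.mem_ball'.2 (hs x hx y hy)).trans (hball x hx)

lemma dist_le_of_norm_inv_sub_le {𝕜 : Type*} [NormedField 𝕜] {a w x y : 𝕜} {M γ : ℝ}
    (hx : x ≠ a) (hy : y ≠ a) (hxM : ‖a - x‖ ≤ M) (hyM : ‖a - y‖ ≤ M)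
    (hxw : ‖(a - x)⁻¹ - w‖ ≤ γ) (hyw : ‖(a - y)⁻¹ - w‖ ≤ γ) :
    dist x y ≤ M ^ 2 * (2 * γ) := by
  have hx' : a - x ≠ 0 := sub_ne_zero.2 hx.symm
  have hy' : a - y ≠ 0 := sub_ne_zero.2 hy.symm
  have hM : 0 ≤ M := (norm_nonneg _).trans hxM
  have hinv : dist (a - x)⁻¹ (a - y)⁻¹ ≤ 2 * γ := by
    rw [← dist_eq_norm] at hxw hyw
    linarith [dist_triangle_right (a - x)⁻¹ (a - y)⁻¹ w]
  calc dist x y = ‖a - x‖ * ‖a - y‖ * dist (a - x)⁻¹ (a - y)⁻¹ := by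
        rw [dist_inv_inv₀ hx' hy', dist_sub_left]
        field_simp [norm_ne_zero_iff.2 hx', norm_ne_zero_iff.2 hy']
    _ ≤ M * M * (2 * γ) := by gcongr
    _ = M ^ 2 * (2 * γ) := by ring

lemma norm_sub_le_of_mem_closedBall_zero {E : Type*} [SeminormedAddCommGroup E] {a x : E} {R : ℝ}
    (hx : x ∈ Metric.closedBall 0 R) : ‖a - x‖ ≤ ‖a‖ + R :=
  (norm_sub_le a x).trans (by gcongr; exact mem_closedBall_zero_iff.1 hx)

theorem frostman_through_inversion_general
    (R q r₀ : ℝ) (hR : 0 < R) (hr₀ : r₀ ∈ Set.Ioo (0 : ℝ) 1)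
    (ν : Measure ℂ)
    (hsupp : ν (Metric.closedBall 0 R)ᶜ = 0)
    (hfrost : ∀ x : ℂ, ∀ r : ℝ, 0 < r → r < r₀ →
      ν (Metric.ball x r) ≤ ENNReal.ofReal (r ^ q))
    (a : ℂ) :
    ∃ C : ℝ, 0 < C ∧ ∃ γ₀ : ℝ, 0 < γ₀ ∧
      ∀ γ : ℝ, 0 < γ → γ < γ₀ → ∀ w : ℂ,
        ν {x : ℂ | x ≠ a ∧ ‖(a - x)⁻¹ - w‖ ≤ γ}
          ≤ ENNReal.ofReal (C * γ ^ q) := by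
  set M := ‖a‖ + R
  have hM : 0 < M := by positivity
  refine ⟨(3 * M ^ 2) ^ q, by positivity, r₀ / (3 * M ^ 2), div_pos hr₀.1 (by positivity),
    fun γ hγ hγr₀ w => ?_⟩
  have hr : 0 < 3 * M ^ 2 * γ := by positivity
  have hr₀' : 3 * M ^ 2 * γ < r₀ := by rwa [lt_div_iff₀ (by positivity), mul_comm] at hγr₀
  rw [← measure_inter_conull hsupp, ← Real.mul_rpow (by positivity) hγ.le]
  refine measure_le_of_forall_dist_lt (fun x _ => hfrost x _ hr hr₀') ?_
  rintro x ⟨⟨hxa, hxw⟩, hxR⟩ y ⟨⟨hya, hyw⟩, hyR⟩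
  calc dist x y ≤ M ^ 2 * (2 * γ) :=
        dist_le_of_norm_inv_sub_le hxa hya (norm_sub_le_of_mem_closedBall_zero hxR)
          (norm_sub_le_of_mem_closedBall_zero hyR) hxw hyw
    _ < 3 * M ^ 2 * γ := by nlinarith [mul_pos (pow_pos hM 2) hγ]

/-- a Frostman-type bound `ν(D(x,r)) ≤ r^q` for a finite measure `ν`
supported in `D(0,R)` transfers through the inversion `x ↦ 1/(a-x)`: for all small `γ`
and every `w ∈ ℂ`, `ν{x ≠ a : |1/(a-x) - w| ≤ γ} ≤ C γ^q`. -/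
theorem frostman_through_inversion
    (R q r₀ : ℝ) (hR : 0 < R) (hq : 0 < q) (hr₀ : r₀ ∈ Set.Ioo (0 : ℝ) 1)
    (ν : Measure ℂ) [IsFiniteMeasure ν]
    (hsupp : ν (Metric.closedBall 0 R)ᶜ = 0)
    (hfrost : ∀ x : ℂ, ∀ r : ℝ, 0 < r → r < r₀ →
      ν (Metric.ball x r) ≤ ENNReal.ofReal (r ^ q))
    (a : ℂ) :
    ∃ C : ℝ, 0 < C ∧ ∃ γ₀ : ℝ, 0 < γ₀ ∧
      ∀ γ : ℝ, 0 < γ → γ < γ₀ → ∀ w : ℂ,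
        ν {x : ℂ | x ≠ a ∧ ‖(a - x)⁻¹ - w‖ ≤ γ}
          ≤ ENNReal.ofReal (C * γ ^ q) :=
  frostman_through_inversion_general R q r₀ hR hr₀ ν hsupp hfrost a
end

section
/- Let μ be a probability measure on ℂ satisfying the Doeblin condition with parameters c₀, r₀ ∈ (0,∞) and z₀ ∈ ℂ, and let a ∈ ℂ with a ≠ z₀. Let ν_a be the law of 1/(a−ξ) where ξ ∼ μ (with any fixed convention at ξ = a, e.g. value 0). Then there exist c_a ∈ (0,1], r_a > 0, w_a ∈ ℂ, and a Borel probability measure η on ℂ such that ν_a = c_a·λ_a + (1−c_a)·η, where λ_a is the uniform probability measure on the disk D(w_a, r_a) (normalized Lebesgue measure on that disk). Equivalently, 1/(a−ξ) has the same distribution as εZ + (1−ε)W, where ε ∼ Bernoulli(c_a), Z ∼ Uniform(D(w_a,r_a)), W ∼ η are independent. -/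
/-!
Away from `0`, the map `y ↦ a - y⁻¹` inverts `x ↦ (a - x)⁻¹`; it is holomorphic with Jacobian
`‖y‖⁻⁴`, which is bounded below near `w = (a - z₀)⁻¹`, and it maps a small disc around `w` into
`D(z₀, r₀)`. By the change of variables formula the law of `(a - ξ)⁻¹` therefore satisfies a
Doeblin condition on that disc. A Doeblin condition with constant `c` on a disc `D` makes the
measure dominate `c · Leb(D)` times the uniform law on `D`, and what remains after removing
part of this mass is, once normalized, the probability measure `η`.
-/

open MeasureTheory ProbabilityTheory Set Metric
open scoped ENNReal

theorem exists_isProbabilityMeasure_eq_smul_add_smul {α : Type*} [MeasurableSpace α]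
    {ν ρ : Measure α} [IsProbabilityMeasure ν] [IsProbabilityMeasure ρ] {c : ℝ} (hc₀ : 0 ≤ c)
    (hc₁ : c < 1) (hle : ENNReal.ofReal c • ρ ≤ ν) :
    ∃ η : Measure α, IsProbabilityMeasure η ∧
      ν = ENNReal.ofReal c • ρ + ENNReal.ofReal (1 - c) • η := by
  have ht₀ : ENNReal.ofReal (1 - c) ≠ 0 := by simpa using hc₁
  have ht : ENNReal.ofReal (1 - c) ≠ ∞ := ENNReal.ofReal_ne_top
  have := ρ.smul_finite (ENNReal.ofReal_ne_top (r := c))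
  refine ⟨(ENNReal.ofReal (1 - c))⁻¹ • (ν - ENNReal.ofReal c • ρ), ⟨?_⟩, ?_⟩
  · have hmass : ENNReal.ofReal (1 - c) = 1 - ENNReal.ofReal c := by
      rw [ENNReal.ofReal_sub _ hc₀, ENNReal.ofReal_one]
    rw [Measure.smul_apply, Measure.sub_apply .univ hle, Measure.smul_apply, measure_univ,
      measure_univ, smul_eq_mul, smul_eq_mul, mul_one, ← hmass, ENNReal.inv_mul_cancel ht₀ ht]
  · rw [smul_smul, ENNReal.mul_inv_cancel ht₀ ht, one_smul, add_comm,
      Measure.sub_add_cancel_of_le hle]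

theorem Complex.ofReal_mul_volume_le_volume_image {s : Set ℂ} (hs : MeasurableSet s)
    {g g' : ℂ → ℂ} (hg : ∀ y ∈ s, HasDerivWithinAt g (g' y) s y) (hinj : InjOn g s) {m : ℝ}
    (hm : ∀ y ∈ s, m ≤ ‖g' y‖ ^ 2) :
    ENNReal.ofReal m * volume s ≤ volume (g '' s) := by
  rw [← lintegral_abs_det_fderiv_eq_addHaar_image volume hs
    (fun y hy => (hg y hy).hasFDerivWithinAt.restrictScalars ℝ) hinj, ← setLIntegral_const]
  refine setLIntegral_mono' hs fun y hy => ENNReal.ofReal_le_ofReal ?_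
  simpa [ContinuousLinearMap.det, LinearMap.det_restrictScalars, Algebra.norm_complex_eq,
    Complex.normSq_eq_norm_sq] using hm y hy

theorem Complex.preimage_inv_sub_eq_image {A : Set ℂ} (hA : (0 : ℂ) ∉ A) (a : ℂ) :
    (fun x => (a - x)⁻¹) ⁻¹' A = (fun y => a - y⁻¹) '' A := by
  ext x
  constructor
  · intro hx
    have hax : a - x ≠ 0 := fun h => hA (by simpa [h] using hx)
    exact ⟨(a - x)⁻¹, hx, by simp⟩
  · rintro ⟨y, hy, rfl⟩
    simpa using hy

theorem norm_mem_Ioo_of_mem_ball_half_norm {E : Type*} [SeminormedAddCommGroup E] {w y : E}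
    (hy : y ∈ ball w (‖w‖ / 2)) : ‖y‖ ∈ Ioo (‖w‖ / 2) (2 * ‖w‖) := by
  rw [mem_ball, dist_eq_norm] at hy
  exact ⟨by linarith [norm_sub_norm_le w y, norm_sub_rev y w],
    by linarith [norm_le_insert' y w, norm_nonneg w]⟩

def DoeblinCondition {α : Type*} [PseudoMetricSpace α] [MeasureSpace α] (μ : Measure α)
    (c r : ℝ) (z : α) : Prop :=
  ∀ A : Set α, MeasurableSet A → A ⊆ ball z r → ENNReal.ofReal c * volume A ≤ μ A

namespace DoeblinCondition

section

variable {α : Type*} [PseudoMetricSpace α] [MeasureSpace α] [OpensMeasurableSpace α]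
  {μ : Measure α} {c r : ℝ} {z : α}

theorem smul_cond_le (h : DoeblinCondition μ c r z) :
    (ENNReal.ofReal c * volume (ball z r)) • volume[|ball z r] ≤ μ := by
  refine Measure.le_iff.2 fun s hs => ?_
  calc ((ENNReal.ofReal c * volume (ball z r)) • volume[|ball z r]) s
      = ENNReal.ofReal c * (volume (ball z r) * (volume (ball z r))⁻¹) *
          volume (ball z r ∩ s) := by
        rw [Measure.smul_apply, cond_apply measurableSet_ball, smul_eq_mul]; ring
    _ ≤ ENNReal.ofReal c * volume (ball z r ∩ s) := by
        gcongr
        exact mul_le_of_le_one_right' (ENNReal.mul_inv_le_one _)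
    _ ≤ μ (ball z r ∩ s) := h _ (measurableSet_ball.inter hs) inter_subset_left
    _ ≤ μ s := measure_mono inter_subset_right

theorem exists_eq_smul_cond_add_smul [ProperSpace α]
    [IsFiniteMeasureOnCompacts (volume : Measure α)] [(volume : Measure α).IsOpenPosMeasure]
    [IsProbabilityMeasure μ] (h : DoeblinCondition μ c r z) (hc : 0 < c) (hr : 0 < r) :
    ∃ ca ∈ Ioc (0 : ℝ) 1, ∃ η : Measure α, IsProbabilityMeasure η ∧
      μ = ENNReal.ofReal ca • volume[|ball z r] + ENNReal.ofReal (1 - ca) • η := by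
  set κ := ENNReal.ofReal c * volume (ball z r)
  have hball := measure_ball_pos volume z hr
  have : IsProbabilityMeasure volume[|ball z r] :=
    cond_isProbabilityMeasure_of_finite hball.ne' measure_ball_lt_top.ne
  have hκ₁ : κ ≤ 1 := by simpa using Measure.le_iff'.1 h.smul_cond_le univ
  have hκ₀ : 0 < κ.toReal := ENNReal.toReal_pos (ENNReal.mul_pos (by simpa using hc) hball.ne').ne'
    (ne_top_of_le_ne_top ENNReal.one_ne_top hκ₁)
  have hκ₁' : κ.toReal ≤ 1 := ENNReal.toReal_le_of_le_ofReal zero_le_one (by simpa using hκ₁)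
  -- Halving keeps `1 - ca` positive, so that `η` can be obtained by normalizing.
  refine ⟨κ.toReal / 2, ⟨by positivity, by linarith⟩,
    exists_isProbabilityMeasure_eq_smul_add_smul (by positivity) (by linarith)
      (le_trans ?_ h.smul_cond_le)⟩
  gcongr
  exact ENNReal.ofReal_le_of_le_toReal (half_le_self hκ₀.le)

end

theorem map_inv_sub {μ : Measure ℂ} {c₀ r₀ : ℝ} {z₀ : ℂ} (h : DoeblinCondition μ c₀ r₀ z₀)
    (hc₀ : 0 < c₀) (hr₀ : 0 < r₀) {a : ℂ} (ha : a ≠ z₀) :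
    ∃ c > 0, ∃ r > 0, DoeblinCondition (μ.map fun x => (a - x)⁻¹) c r (a - z₀)⁻¹ := by
  set w := (a - z₀)⁻¹
  have hw : 0 < ‖w‖ := norm_pos_iff.2 (inv_ne_zero (sub_ne_zero.2 ha))
  set g : ℂ → ℂ := fun y => a - y⁻¹
  have hgw : g w = z₀ := by simp [g, w]
  obtain ⟨δ, hδ, hgδ⟩ := Metric.continuousAt_iff.1
    (continuousAt_const.sub (continuousAt_inv₀ (norm_pos_iff.1 hw)) : ContinuousAt g w) r₀ hr₀
  refine ⟨c₀ * ((2 * ‖w‖) ^ 4)⁻¹, by positivity, min δ (‖w‖ / 2), lt_min hδ (by positivity),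
    fun A hA hAsub => ?_⟩
  have hnorm : ∀ y ∈ A, ‖y‖ ∈ Ioo (‖w‖ / 2) (2 * ‖w‖) := fun y hy =>
    norm_mem_Ioo_of_mem_ball_half_norm (ball_subset_ball (min_le_right _ _) (hAsub hy))
  have hA0 : (0 : ℂ) ∉ A := fun h0 => by linarith [(hnorm 0 h0).1, norm_zero (E := ℂ)]
  have hpre := Complex.preimage_inv_sub_eq_image hA0 a
  have hf : Measurable fun x : ℂ => (a - x)⁻¹ := (measurable_const.sub measurable_id).inv
  have himg : g '' A ⊆ ball z₀ r₀ := by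
    rintro _ ⟨y, hy, rfl⟩
    rw [← hgw]
    exact hgδ ((hAsub hy).trans_le (min_le_left _ _))
  have hderiv : ∀ y ∈ A, HasDerivWithinAt g ((y ^ 2)⁻¹) A y := fun y hy => by
    simpa [g] using ((hasDerivAt_inv (ne_of_mem_of_not_mem hy hA0)).const_sub a).hasDerivWithinAt
  have hjac : ∀ y ∈ A, ((2 * ‖w‖) ^ 4)⁻¹ ≤ ‖(y ^ 2)⁻¹‖ ^ 2 := fun y hy => by
    rw [norm_inv (y ^ 2), norm_pow, inv_pow, ← pow_mul]
    exact inv_anti₀ (pow_pos (by linarith [(hnorm y hy).1]) _)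
      (pow_le_pow_left₀ (norm_nonneg y) (hnorm y hy).2.le 4)
  have hinj : InjOn g A := fun y₁ _ y₂ _ he => inv_injective (sub_right_injective he)
  calc ENNReal.ofReal (c₀ * ((2 * ‖w‖) ^ 4)⁻¹) * volume A
      = ENNReal.ofReal c₀ * (ENNReal.ofReal ((2 * ‖w‖) ^ 4)⁻¹ * volume A) := by
        rw [ENNReal.ofReal_mul hc₀.le, mul_assoc]
    _ ≤ ENNReal.ofReal c₀ * volume (g '' A) := by
        gcongr
        exact Complex.ofReal_mul_volume_le_volume_image hA hderiv hinj hjac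
    _ ≤ μ (g '' A) := h _ (hpre ▸ hf hA) himg
    _ = μ.map (fun x => (a - x)⁻¹) A := by rw [Measure.map_apply hf hA, hpre]

end DoeblinCondition

/-- Nummelin splitting.  If `μ` satisfies the Doeblin condition with
parameters `c₀, r₀, z₀` and `a ≠ z₀`, then the law `ν_a` of `1/(a-ξ)`, `ξ ∼ μ` (with
Lean's convention `1/0 = 0` at `ξ = a`) decomposes as
`ν_a = c_a · Unif(D(w_a,r_a)) + (1-c_a) · η` for some `c_a ∈ (0,1]`, `r_a > 0`,
`w_a ∈ ℂ` and a Borel probability measure `η`. -/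
theorem nummelin_splitting
    (μ : Measure ℂ) [IsProbabilityMeasure μ]
    (c₀ r₀ : ℝ) (z₀ : ℂ) (hc₀ : 0 < c₀) (hr₀ : 0 < r₀)
    (hdoeblin : ∀ A : Set ℂ, MeasurableSet A → A ⊆ Metric.ball z₀ r₀ →
      ENNReal.ofReal c₀ * volume A ≤ μ A)
    (a : ℂ) (ha : a ≠ z₀) :
    ∃ ca : ℝ, ca ∈ Set.Ioc (0 : ℝ) 1 ∧
    ∃ ra : ℝ, 0 < ra ∧ ∃ wa : ℂ, ∃ η : Measure ℂ, IsProbabilityMeasure η ∧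
      Measure.map (fun x : ℂ => (a - x)⁻¹) μ =
        ENNReal.ofReal ca •
            ((volume (Metric.ball wa ra))⁻¹ • volume.restrict (Metric.ball wa ra)) +
          ENNReal.ofReal (1 - ca) • η := by
  have : IsProbabilityMeasure (μ.map fun x : ℂ => (a - x)⁻¹) :=
    Measure.isProbabilityMeasure_map (measurable_const.sub measurable_id).inv.aemeasurable
  obtain ⟨c, hc, r, hr, hmap⟩ := DoeblinCondition.map_inv_sub hdoeblin hc₀ hr₀ ha
  obtain ⟨ca, hca, η, hη, hsplit⟩ := hmap.exists_eq_smul_cond_add_smul hc hr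
  exact ⟨ca, hca, r, hr, _, η, hη, hsplit⟩
end

section
/- Let Y_1, …, Y_n be i.i.d. complex random variables with E[Y_1] = c and σ² := E[|Y_1 − c|²] < ∞. For 1 ≤ k ≤ n let S_{k,n} := Σ_{1 ≤ i_1 < … < i_k ≤ n} Y_{i_1}⋯Y_{i_k}. Then E[S_{k,n}] = C(n,k)·c^k and E[ |S_{k,n} − E S_{k,n}|² ] = Σ_{r=1}^{k} C(n,r)·C(n−r, k−r)²·σ^{2r}·|c|^{2(k−r)}. -/
/-!
Write `Y i = c + Z i` with `Z i` centred. Each `r`-subset of indices lies in `C(n-r, k-r)` of the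
`k`-subsets, so expanding the products gives
`S_{k,n} - C(n,k) c^k = ∑_{r=1}^k C(n-r,k-r) c^(k-r) e_r(Z)`, with `e_r` the elementary symmetric
polynomials. By independence and centring, the monomials `∏_{i ∈ u} Z i` are orthogonal in `L²`
with squared norm `σ^(2|u|)`; hence the `e_r(Z)` are orthogonal with squared norm `C(n,r) σ^(2r)`,
and the variance follows from Pythagoras.
-/

open MeasureTheory ProbabilityTheory Finset
open scoped ComplexConjugate

namespace Finset

variable {ι : Type*} [DecidableEq ι]

theorem sum_powersetCard_sum_powersetCard {M : Type*} [AddCommMonoid M] (U : Finset ι)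
    {r k : ℕ} (hrk : r ≤ k) (g : Finset ι → M) :
    ∑ s ∈ U.powersetCard k, ∑ t ∈ s.powersetCard r, g t
      = (#U - r).choose (k - r) • ∑ t ∈ U.powersetCard r, g t := by
  rw [sum_comm' (t' := U.powersetCard r) (s' := fun t ↦ (U.powersetCard k).filter (t ⊆ ·))]
  · rw [smul_sum]
    refine sum_congr rfl fun t ht ↦ ?_
    obtain ⟨htU, htr⟩ := mem_powersetCard.1 ht
    rw [sum_const, card_filter_powersetCard_subset t U k htU (htr ▸ hrk), htr]
  · simp only [mem_powersetCard, mem_filter]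
    exact fun s t ↦
      ⟨fun ⟨⟨hsU, hsk⟩, hts, htr⟩ ↦ ⟨⟨⟨hsU, hsk⟩, hts⟩, hts.trans hsU, htr⟩,
        fun ⟨⟨⟨hsU, hsk⟩, hts⟩, _, htr⟩ ↦ ⟨⟨hsU, hsk⟩, hts, htr⟩⟩

theorem sum_powersetCard_prod_add {R : Type*} [CommSemiring R] (U : Finset ι) (k : ℕ)
    (x : ι → R) (c : R) :
    ∑ s ∈ U.powersetCard k, ∏ i ∈ s, (x i + c)
      = ∑ r ∈ range (k + 1),
          ((#U - r).choose (k - r) * c ^ (k - r)) * ∑ t ∈ U.powersetCard r, ∏ i ∈ t, x i := by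
  have hexpand : ∀ s ∈ U.powersetCard k, ∏ i ∈ s, (x i + c)
      = ∑ r ∈ range (k + 1), ∑ t ∈ s.powersetCard r, c ^ (k - r) * ∏ i ∈ t, x i := by
    intro s hs
    have hsk := (mem_powersetCard.1 hs).2
    rw [prod_add, sum_powerset, hsk]
    refine sum_congr rfl fun r _ ↦ sum_congr rfl fun t ht ↦ ?_
    rw [prod_const, card_sdiff_of_subset (mem_powersetCard.1 ht).1, hsk,
      (mem_powersetCard.1 ht).2, mul_comm]
  rw [sum_congr rfl hexpand, sum_comm]
  refine sum_congr rfl fun r hr ↦ ?_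
  rw [sum_powersetCard_sum_powersetCard U (Nat.lt_succ_iff.1 (mem_range.1 hr)), nsmul_eq_mul,
    ← mul_sum, mul_assoc]

theorem sum_powersetCard_prod_sub_choose_mul_pow {R : Type*} [CommRing R] (U : Finset ι)
    (k : ℕ) (x : ι → R) (c : R) :
    ∑ s ∈ U.powersetCard k, ∏ i ∈ s, x i - (#U).choose k * c ^ k
      = ∑ r ∈ Icc 1 k, ((#U - r).choose (k - r) * c ^ (k - r)) *
          ∑ t ∈ U.powersetCard r, ∏ i ∈ t, (x i - c) := by
  have h := sum_powersetCard_prod_add U k (fun i ↦ x i - c) c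
  simp only [sub_add_cancel] at h
  rw [h, range_eq_Ico, sum_eq_sum_Ico_succ_bot (by omega : 0 < k + 1), zero_add,
    Ico_add_one_right_eq_Icc]
  simp

end Finset

section

variable {Ω ι 𝕜 : Type*} [MeasurableSpace Ω] {μ : Measure Ω} [RCLike 𝕜]

theorem ProbabilityTheory.iIndepFun.integrable_finset_prod {X : ι → Ω → 𝕜}
    (hX : iIndepFun X μ) (hmeas : ∀ i, Measurable (X i)) (s : Finset ι)
    (hint : ∀ i ∈ s, Integrable (X i) μ) :
    Integrable (fun ω ↦ ∏ i ∈ s, X i ω) μ := by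
  refine ⟨s.aestronglyMeasurable_fun_prod fun i hi ↦ (hint i hi).1, ?_⟩
  rw [hasFiniteIntegral_iff_enorm]
  simp_rw [enorm_eq_nnnorm, nnnorm_prod, ENNReal.ofNNReal_finsetProd, ← enorm_eq_nnnorm]
  rw [lintegral_prod_eq_prod_lintegral_of_indepFun s (fun i ω ↦ ‖X i ω‖ₑ)
    (hX.comp _ fun _ ↦ measurable_enorm) fun i ↦ (hmeas i).enorm]
  exact ENNReal.prod_lt_top fun i hi ↦ (hint i hi).2

theorem ProbabilityTheory.iIndepFun.integral_finset_prod {X : ι → Ω → 𝕜}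
    (hX : iIndepFun X μ) (hmeas : ∀ i, AEStronglyMeasurable (X i) μ) (s : Finset ι) :
    ∫ ω, ∏ i ∈ s, X i ω ∂μ = ∏ i ∈ s, ∫ ω, X i ω ∂μ := by
  simp_rw [← prod_coe_sort s]
  exact (hX.precomp Subtype.val_injective).integral_fun_prod_eq_prod_integral fun i ↦ hmeas i

theorem ProbabilityTheory.iIndepFun.integral_esymm [Fintype ι] {X : ι → Ω → 𝕜}
    (hX : iIndepFun X μ) (hmeas : ∀ i, Measurable (X i)) (hint : ∀ i, Integrable (X i) μ)
    {c : 𝕜} (hmean : ∀ i, ∫ ω, X i ω ∂μ = c) (k : ℕ) :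
    ∫ ω, ∑ s ∈ powersetCard k univ, ∏ i ∈ s, X i ω ∂μ = (Fintype.card ι).choose k * c ^ k := by
  rw [integral_finsetSum _ fun s _ ↦ hX.integrable_finset_prod hmeas s fun i _ ↦ hint i,
    sum_congr rfl fun s hs ↦ by
      rw [hX.integral_finset_prod (fun i ↦ (hint i).1), prod_congr rfl fun i _ ↦ hmean i,
        prod_const, (mem_powersetCard.1 hs).2],
    sum_const, card_powersetCard, card_univ, nsmul_eq_mul]

theorem ofReal_integral_norm_sq (f : Ω → 𝕜) :
    ((∫ ω, ‖f ω‖ ^ 2 ∂μ : ℝ) : 𝕜) = ∫ ω, f ω * conj (f ω) ∂μ := by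
  simp_rw [RCLike.mul_conj, ← RCLike.ofReal_pow, integral_ofReal]

theorem integral_sum_mul_conj_sum_of_orthogonal {α : Type*} [DecidableEq α] (A B : Finset α)
    (a b : α → 𝕜) (f : α → Ω → 𝕜) (m : α → 𝕜)
    (hint : ∀ r ∈ A, ∀ q ∈ B, Integrable (fun ω ↦ f r ω * conj (f q ω)) μ)
    (horth : ∀ r ∈ A, ∀ q ∈ B, ∫ ω, f r ω * conj (f q ω) ∂μ = if r = q then m r else 0) :
    ∫ ω, (∑ r ∈ A, a r * f r ω) * conj (∑ q ∈ B, b q * f q ω) ∂μ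
      = ∑ r ∈ A ∩ B, a r * conj (b r) * m r := by
  have hexpand : ∀ ω, (∑ r ∈ A, a r * f r ω) * conj (∑ q ∈ B, b q * f q ω)
      = ∑ r ∈ A, ∑ q ∈ B, a r * conj (b q) * (f r ω * conj (f q ω)) := fun ω ↦ by
    simp only [map_sum, map_mul, sum_mul_sum]
    exact sum_congr rfl fun _ _ ↦ sum_congr rfl fun _ _ ↦ by ring
  simp_rw [hexpand]
  rw [integral_finsetSum _ fun r hr ↦ integrable_finsetSum _ fun q hq ↦
    (hint r hr q hq).const_mul _, ← sum_ite_mem]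
  refine sum_congr rfl fun r hr ↦ ?_
  rw [integral_finsetSum _ fun q hq ↦ (hint r hr q hq).const_mul _]
  simp_rw [integral_const_mul]
  rw [sum_congr rfl fun q hq ↦ by rw [horth r hr q hq, mul_ite, mul_zero], sum_ite_eq]

theorem integrable_and_integral_ite_mul_conj_ite [IsProbabilityMeasure μ] {X : Ω → 𝕜}
    (hX : MemLp X 2 μ) (hcent : ∫ ω, X ω ∂μ = 0) (p q : Prop) [Decidable p] [Decidable q] :
    Integrable (fun ω ↦ (if p then X ω else 1) * (if q then conj (X ω) else 1)) μ ∧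
      ∫ ω, (if p then X ω else 1) * (if q then conj (X ω) else 1) ∂μ
        = if p then (if q then ((∫ ω, ‖X ω‖ ^ 2 ∂μ : ℝ) : 𝕜) else 0)
          else (if q then 0 else 1) := by
  have hXint : Integrable X μ := hX.integrable one_le_two
  by_cases hp : p <;> by_cases hq : q <;> simp only [hp, hq, if_true, if_false, mul_one, one_mul]
  · simp_rw [RCLike.mul_conj, ← RCLike.ofReal_pow]
    exact ⟨(hX.integrable_norm_pow two_ne_zero).ofReal, integral_ofReal⟩
  · exact ⟨hXint, hcent⟩
  · exact ⟨RCLike.conjCLE.toContinuousLinearMap.integrable_comp hXint,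
      by rw [integral_conj, hcent, map_zero]⟩
  · simp

theorem integrable_and_integral_prod_mul_conj_prod [Fintype ι] [DecidableEq ι]
    [IsProbabilityMeasure μ] {Z : ι → Ω → 𝕜} (hZ : iIndepFun Z μ)
    (hmeas : ∀ i, Measurable (Z i)) (hL2 : ∀ i, MemLp (Z i) 2 μ)
    (hcent : ∀ i, ∫ ω, Z i ω ∂μ = 0) (u v : Finset ι) :
    Integrable (fun ω ↦ (∏ i ∈ u, Z i ω) * conj (∏ i ∈ v, Z i ω)) μ ∧
      ∫ ω, (∏ i ∈ u, Z i ω) * conj (∏ i ∈ v, Z i ω) ∂μ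
        = if u = v then ∏ i ∈ u, ((∫ ω, ‖Z i ω‖ ^ 2 ∂μ : ℝ) : 𝕜) else 0 := by
  -- Coordinate `i` contributes `Z i`, `conj (Z i)`, `‖Z i‖²` or `1` according to its membership
  -- in `u` and `v`.
  set g : ι → 𝕜 → 𝕜 := fun i z ↦ (if i ∈ u then z else 1) * (if i ∈ v then conj z else 1)
  have hg : ∀ i, Measurable (g i) := fun i ↦ by
    have := RCLike.continuous_conj (K := 𝕜)
    simp only [g]; split_ifs <;> fun_prop
  have hW : iIndepFun (fun i ω ↦ g i (Z i ω)) μ := hZ.comp g hg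
  have hprod : (fun ω ↦ (∏ i ∈ u, Z i ω) * conj (∏ i ∈ v, Z i ω))
      = fun ω ↦ ∏ i, g i (Z i ω) := by
    ext ω; simp only [g, prod_mul_distrib, prod_ite_mem, univ_inter, map_prod]
  have hmom := fun i ↦ integrable_and_integral_ite_mul_conj_ite (hL2 i) (hcent i) (i ∈ u) (i ∈ v)
  rw [hprod]
  refine ⟨hW.integrable_finset_prod (fun i ↦ (hg i).comp (hmeas i)) univ fun i _ ↦ (hmom i).1, ?_⟩
  rw [hW.integral_finset_prod (fun i ↦ (hmom i).1.1) univ]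
  simp only [g, fun i ↦ (hmom i).2]
  split_ifs with huv
  · subst huv
    refine (prod_congr rfl fun i _ ↦ ?_).trans (Fintype.prod_ite_mem u _)
    split_ifs <;> rfl
  · obtain ⟨i, hi⟩ : ∃ i, ¬(i ∈ u ↔ i ∈ v) := by simpa [Finset.ext_iff] using huv
    refine prod_eq_zero (mem_univ i) ?_
    by_cases hu : i ∈ u <;> by_cases hv : i ∈ v <;> simp_all

theorem integrable_and_integral_esymm_mul_conj_esymm [Fintype ι] [DecidableEq ι]
    [IsProbabilityMeasure μ] {Z : ι → Ω → 𝕜} (hZ : iIndepFun Z μ)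
    (hmeas : ∀ i, Measurable (Z i)) (hL2 : ∀ i, MemLp (Z i) 2 μ)
    (hcent : ∀ i, ∫ ω, Z i ω ∂μ = 0) {v : ℝ} (hvar : ∀ i, ∫ ω, ‖Z i ω‖ ^ 2 ∂μ = v) (r q : ℕ) :
    Integrable (fun ω ↦ (∑ u ∈ powersetCard r univ, ∏ i ∈ u, Z i ω) *
        conj (∑ w ∈ powersetCard q univ, ∏ i ∈ w, Z i ω)) μ ∧
      ∫ ω, (∑ u ∈ powersetCard r univ, ∏ i ∈ u, Z i ω) *
          conj (∑ w ∈ powersetCard q univ, ∏ i ∈ w, Z i ω) ∂μ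
        = if r = q then ((Fintype.card ι).choose r * v ^ r : 𝕜) else 0 := by
  have hprod := integrable_and_integral_prod_mul_conj_prod hZ hmeas hL2 hcent
  constructor
  · simp only [map_sum, sum_mul_sum]
    exact integrable_finsetSum _ fun u _ ↦ integrable_finsetSum _ fun w _ ↦ (hprod u w).1
  · have h := integral_sum_mul_conj_sum_of_orthogonal (powersetCard r univ)
      (powersetCard q univ) 1 1 (fun u ω ↦ ∏ i ∈ u, Z i ω) (fun u ↦ (v : 𝕜) ^ #u)
      (fun u _ w _ ↦ (hprod u w).1)
      (fun u _ w _ ↦ by simp only [(hprod u w).2, hvar, prod_const])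
    simp only [Pi.one_apply, one_mul, map_one, mul_one] at h
    rw [h]
    split_ifs with hrq
    · rw [hrq, inter_self, sum_congr rfl fun u hu ↦ by rw [(mem_powersetCard.1 hu).2],
        sum_const, card_powersetCard, card_univ, nsmul_eq_mul]
    · rw [disjoint_iff_inter_eq_empty.1 (pairwise_disjoint_powersetCard _ hrq), sum_empty]

end

theorem esymm_mean_variance_general
    {Ω : Type*} [MeasureSpace Ω] [IsProbabilityMeasure (ℙ : Measure Ω)]
    (n k : ℕ)
    (Y : Fin n → Ω → ℂ) (hmeas : ∀ i, Measurable (Y i))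
    (hindep : iIndepFun Y ℙ)
    (hL2 : ∀ i, MemLp (Y i) 2 ℙ)
    (c : ℂ) (hmean : ∀ i, ∫ ω, Y i ω ∂ℙ = c)
    (σ : ℝ) (hσ : ∀ i, σ ^ 2 = ∫ ω, ‖Y i ω - c‖ ^ 2 ∂ℙ) :
    (∫ ω, (∑ s ∈ Finset.powersetCard k (Finset.univ : Finset (Fin n)),
        ∏ i ∈ s, Y i ω) ∂ℙ) = (n.choose k : ℂ) * c ^ k ∧
    (∫ ω, ‖(∑ s ∈ Finset.powersetCard k (Finset.univ : Finset (Fin n)),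
          ∏ i ∈ s, Y i ω) - (n.choose k : ℂ) * c ^ k‖ ^ 2 ∂ℙ)
      = ∑ r ∈ Finset.Icc 1 k, (n.choose r : ℝ) * ((n - r).choose (k - r) : ℝ) ^ 2 *
          (σ ^ 2) ^ r * (‖c‖ ^ 2) ^ (k - r) := by
  have hYint : ∀ i, Integrable (Y i) ℙ := fun i ↦ (hL2 i).integrable one_le_two
  set Z : Fin n → Ω → ℂ := fun i ω ↦ Y i ω - c
  have hZcent : ∀ i, ∫ ω, Z i ω ∂ℙ = 0 := fun i ↦ by
    simp [Z, integral_sub (hYint i) (integrable_const c), hmean]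
  have hdev : ∀ ω, (∑ s ∈ powersetCard k univ, ∏ i ∈ s, Y i ω) - n.choose k * c ^ k
      = ∑ r ∈ Icc 1 k, ((n - r).choose (k - r) * c ^ (k - r) : ℂ) *
          ∑ u ∈ powersetCard r univ, ∏ i ∈ u, Z i ω := fun ω ↦ by
    simpa using sum_powersetCard_prod_sub_choose_mul_pow univ k (fun i ↦ Y i ω) c
  have hZ : iIndepFun Z ℙ := hindep.comp (fun _ y ↦ y - c) fun _ ↦ measurable_id.sub_const c
  have horth := integrable_and_integral_esymm_mul_conj_esymm hZ
    (fun i ↦ (hmeas i).sub_const c) (fun i ↦ (hL2 i).sub (memLp_const c)) hZcent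
    (fun i ↦ (hσ i).symm)
  refine ⟨by simpa using hindep.integral_esymm hmeas hYint hmean k, ?_⟩
  apply RCLike.ofReal_injective (K := ℂ)
  rw [ofReal_integral_norm_sq]
  simp_rw [hdev]
  rw [integral_sum_mul_conj_sum_of_orthogonal _ _ _ _ _ _ (fun r _ q _ ↦ (horth r q).1)
    (fun r _ q _ ↦ (horth r q).2), inter_self]
  push_cast
  refine sum_congr rfl fun r _ ↦ ?_
  rw [← RCLike.mul_conj]
  simp only [map_mul, map_pow, map_natCast, Fintype.card_fin]
  ring

/-- mean and variance of the `k`-th elementary symmetric polynomial of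
i.i.d. complex random variables with mean `c` and variance `σ²`:
`E[S_{k,n}] = C(n,k) c^k` and
`E|S_{k,n} - E S_{k,n}|² = Σ_{r=1}^k C(n,r) C(n-r,k-r)² σ^{2r} |c|^{2(k-r)}`. -/
theorem esymm_mean_variance
    {Ω : Type*} [MeasureSpace Ω] [IsProbabilityMeasure (ℙ : Measure Ω)]
    (n k : ℕ) (hk1 : 1 ≤ k) (hkn : k ≤ n)
    (Y : Fin n → Ω → ℂ) (hmeas : ∀ i, Measurable (Y i))
    (hindep : iIndepFun Y ℙ)
    (hident : ∀ i j, Measure.map (Y i) ℙ = Measure.map (Y j) ℙ)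
    (hL2 : ∀ i, MemLp (Y i) 2 ℙ)
    (c : ℂ) (hmean : ∀ i, ∫ ω, Y i ω ∂ℙ = c)
    (σ : ℝ) (hσ : ∀ i, σ ^ 2 = ∫ ω, ‖Y i ω - c‖ ^ 2 ∂ℙ) :
    (∫ ω, (∑ s ∈ Finset.powersetCard k (Finset.univ : Finset (Fin n)),
        ∏ i ∈ s, Y i ω) ∂ℙ) = (n.choose k : ℂ) * c ^ k ∧
    (∫ ω, ‖(∑ s ∈ Finset.powersetCard k (Finset.univ : Finset (Fin n)),
          ∏ i ∈ s, Y i ω) - (n.choose k : ℂ) * c ^ k‖ ^ 2 ∂ℙ)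
      = ∑ r ∈ Finset.Icc 1 k, (n.choose r : ℝ) * ((n - r).choose (k - r) : ℝ) ^ 2 *
          (σ ^ 2) ^ r * (‖c‖ ^ 2) ^ (k - r) :=
  esymm_mean_variance_general n k Y hmeas hindep hL2 c hmean σ hσ
end

section
/- Let μ be a probability measure on ℂ, let z₀ ∈ ℂ with p := μ({z₀}) > 0, let ξ_1, ξ_2, … be i.i.d. with law μ, and let P_n(z) = ∏_{j=1}^n (z − ξ_j). Let (k_n) be integers with 1 ≤ k_n < n and k_n/n → 0. Then almost surely, liminf_{n→∞} μ_{P_n^{(k_n)}}({z₀}) ≥ p, i.e. liminf_{n→∞} m_n/(n−k_n) ≥ p, where m_n is the multiplicity of z₀ as a root of P_n^{(k_n)}. -/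
open MeasureTheory ProbabilityTheory Polynomial Filter Topology
open scoped ENNReal

/-!
The number `N_n` of indices `j < n` with `ξ_j = z₀` is the multiplicity of `z₀` as a root of
`P_n`, and each derivative lowers a root multiplicity by at most one, so `z₀` is a root of
`P_n^{(k_n)}` of multiplicity `m_n ≥ N_n - k_n`. By the strong law of large numbers applied to the
indicators of `{ξ_j = z₀}`, `N_n / n → p` almost surely, and since `k_n = o(n)` this gives
`(N_n - k_n) / (n - k_n) → p`. As `m_n ≤ deg P_n^{(k_n)} ≤ n - k_n`, the ratios `m_n / (n - k_n)`
are bounded by `1`, so their liminf is at least `p`.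
-/

namespace Polynomial

variable {R : Type*} [CommRing R] [IsDomain R]

theorem rootMultiplicity_le_natDegree (p : R[X]) (a : R) : p.rootMultiplicity a ≤ p.natDegree := by
  classical
  exact (count_roots p).symm.le.trans ((Multiset.count_le_card _ _).trans (card_roots' p))

theorem rootMultiplicity_iterate_derivative_le (p : R[X]) (a : R) (k : ℕ) :
    (derivative^[k] p).rootMultiplicity a ≤ p.natDegree - k :=
  (rootMultiplicity_le_natDegree _ a).trans (natDegree_iterate_derivative p k)

theorem rootMultiplicity_le_rootMultiplicity_iterate_derivative_add [CharZero R]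
    (p : R[X]) (a : R) (k : ℕ) :
    p.rootMultiplicity a ≤ (derivative^[k] p).rootMultiplicity a + k := by
  induction k with
  | zero => simp
  | succ k ih =>
    have := rootMultiplicity_sub_one_le_derivative_rootMultiplicity (derivative^[k] p) a
    rw [Function.iterate_succ_apply']
    omega

theorem rootMultiplicity_prod_X_sub_C [DecidableEq R] {ι : Type*} (s : Finset ι) (f : ι → R)
    (a : R) : (∏ j ∈ s, (X - C (f j))).rootMultiplicity a = (s.filter (f · = a)).card := by
  have hmap : (s.val.map fun j => X - C (f j)) = (s.val.map f).map fun b => X - C b := by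
    rw [Multiset.map_map]; rfl
  rw [← count_roots, Finset.prod_eq_multiset_prod, hmap, roots_multiset_prod_X_sub_C,
    Multiset.count_map, Finset.card_def, Finset.filter_val]
  simp only [eq_comm]

end Polynomial

theorem natDegree_Pn {Ω : Type*} (ξ : ℕ → Ω → ℂ) (n : ℕ) (ω : Ω) : (Pn ξ n ω).natDegree = n := by
  rw [Pn, natDegree_prod_of_monic _ _ fun j _ => monic_X_sub_C _]
  simp

theorem eventually_lt_of_tendsto_div_zero {k : ℕ → ℕ}
    (hk : Tendsto (fun n => (k n : ℝ) / n) atTop (𝓝 0)) : ∀ᶠ n in atTop, k n < n := by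
  filter_upwards [hk.eventually (gt_mem_nhds one_pos), eventually_gt_atTop 0] with n hkn hn
  rw [div_lt_one (by positivity)] at hkn
  exact_mod_cast hkn

theorem tendsto_sub_div_sub {N k : ℕ → ℕ} {p : ℝ}
    (hN : Tendsto (fun n => (N n : ℝ) / n) atTop (𝓝 p))
    (hk : Tendsto (fun n => (k n : ℝ) / n) atTop (𝓝 0)) :
    Tendsto (fun n => ((N n : ℝ) - k n) / ((n - k n : ℕ) : ℝ)) atTop (𝓝 p) := by
  have hlim : Tendsto (fun n => ((N n : ℝ) / n - k n / n) / (1 - k n / n)) atTop (𝓝 p) := by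
    have := (hN.sub hk).div (tendsto_const_nhds.sub hk) (by norm_num : (1 : ℝ) - 0 ≠ 0)
    simp only [sub_zero, div_one] at this
    exact this
  refine hlim.congr' ?_
  filter_upwards [eventually_lt_of_tendsto_div_zero hk] with n hkn
  have hkn' : (k n : ℝ) < n := by exact_mod_cast hkn
  have hn : (n : ℝ) ≠ 0 := by linarith [(k n).cast_nonneg (α := ℝ)]
  rw [Nat.cast_sub hkn.le]
  field_simp

theorem le_liminf_div_sub_of_le_add {N m k : ℕ → ℕ} {p : ℝ}
    (hN : Tendsto (fun n => (N n : ℝ) / n) atTop (𝓝 p))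
    (hk : Tendsto (fun n => (k n : ℝ) / n) atTop (𝓝 0))
    (hNm : ∀ n, N n ≤ m n + k n) (hm : ∀ n, m n ≤ n - k n) :
    p ≤ liminf (fun n => (m n : ℝ) / ((n - k n : ℕ) : ℝ)) atTop := by
  have hlim := tendsto_sub_div_sub hN hk
  rw [← hlim.liminf_eq]
  refine liminf_le_liminf (Eventually.of_forall fun n => ?_) hlim.isBoundedUnder_ge
    (isCoboundedUnder_ge_of_le atTop (x := 1) fun n => ?_)
  · have : (N n : ℝ) ≤ m n + k n := by exact_mod_cast hNm n
    exact div_le_div_of_nonneg_right (by linarith) (Nat.cast_nonneg _)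
  · exact div_le_one_of_le₀ (by exact_mod_cast hm n) (Nat.cast_nonneg _)

theorem ae_tendsto_card_filter_div {Ω α : Type*} [MeasurableSpace Ω] [MeasurableSpace α]
    {P : Measure Ω} [IsFiniteMeasure P] {μ : Measure α} {ξ : ℕ → Ω → α}
    (hmeas : ∀ i, Measurable (ξ i)) (hindep : Pairwise fun i j => IndepFun (ξ i) (ξ j) P)
    (hdist : ∀ i, P.map (ξ i) = μ) {s : Set α} (hs : MeasurableSet s) [DecidablePred (· ∈ s)] :
    ∀ᵐ ω ∂P, Tendsto (fun n => (((Finset.range n).filter (ξ · ω ∈ s)).card : ℝ) / n) atTop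
      (𝓝 (μ s).toReal) := by
  set Y : ℕ → Ω → ℝ := fun i => s.indicator 1 ∘ ξ i
  have hindicator : Measurable (s.indicator (1 : α → ℝ)) := measurable_one.indicator hs
  have hint : Integrable (Y 0) P :=
    (integrable_const (1 : ℝ)).indicator (hmeas 0 hs) |>.congr
      (Eventually.of_forall fun _ => Set.indicator_comp_right (g := (1 : α → ℝ)) (ξ 0))
  have hmean : P[Y 0] = (μ s).toReal := by
    rw [show Y 0 = fun ω => s.indicator 1 (ξ 0 ω) from rfl,
      ← integral_map (hmeas 0).aemeasurable hindicator.aestronglyMeasurable, hdist 0,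
      integral_indicator_one hs, measureReal_def]
  have hident (i : ℕ) : IdentDistrib (Y i) (Y 0) P P :=
    (IdentDistrib.mk (hmeas i).aemeasurable (hmeas 0).aemeasurable (by rw [hdist i, hdist 0])).comp
      hindicator
  filter_upwards [strong_law_ae_real Y hint (fun i j hij => (hindep hij).comp hindicator hindicator)
    hident] with ω hω
  rw [hmean] at hω
  refine hω.congr fun n => ?_
  simp [Y, Set.indicator_apply, Finset.sum_boole]

theorem atom_liminf_multiplicity_general
    {Ω : Type*} [MeasureSpace Ω] [IsProbabilityMeasure (ℙ : Measure Ω)]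
    (μ : Measure ℂ)
    (z₀ : ℂ)
    (ξ : ℕ → Ω → ℂ) (hmeas : ∀ i, Measurable (ξ i))
    (hindep : iIndepFun ξ ℙ)
    (hdist : ∀ i, Measure.map (ξ i) ℙ = μ)
    (k : ℕ → ℕ)
    (hko : Tendsto (fun n => (k n : ℝ) / n) atTop (𝓝 0)) :
    ∀ᵐ ω ∂ℙ, (μ {z₀}).toReal ≤
      Filter.liminf (fun n =>
        ((derivative^[k n] (Pn ξ n ω)).rootMultiplicity z₀ : ℝ) / ((n - k n : ℕ) : ℝ))
        atTop := by
  filter_upwards [ae_tendsto_card_filter_div hmeas (fun i j hij => hindep.indepFun hij) hdist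
    (measurableSet_singleton z₀)] with ω hfreq
  refine le_liminf_div_sub_of_le_add hfreq hko (fun n => ?_) (fun n => ?_)
  · have := rootMultiplicity_le_rootMultiplicity_iterate_derivative_add (Pn ξ n ω) z₀ (k n)
    rwa [Pn, rootMultiplicity_prod_X_sub_C] at this
  · simpa only [natDegree_Pn] using rootMultiplicity_iterate_derivative_le (Pn ξ n ω) z₀ (k n)

/-- if `z₀` is an atom of `μ` of mass `p > 0` and `k_n = o(n)`, then
almost surely `liminf_n m_n/(n-k_n) ≥ p`, where `m_n` is the multiplicity of `z₀` as a
root of `P_n^{(k_n)}`. -/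
theorem atom_liminf_multiplicity
    {Ω : Type*} [MeasureSpace Ω] [IsProbabilityMeasure (ℙ : Measure Ω)]
    (μ : Measure ℂ) [IsProbabilityMeasure μ]
    (z₀ : ℂ) (hatom : 0 < μ {z₀})
    (ξ : ℕ → Ω → ℂ) (hmeas : ∀ i, Measurable (ξ i))
    (hindep : iIndepFun ξ ℙ)
    (hdist : ∀ i, Measure.map (ξ i) ℙ = μ)
    (k : ℕ → ℕ) (hk : ∀ n, 2 ≤ n → 1 ≤ k n ∧ k n < n)
    (hko : Tendsto (fun n => (k n : ℝ) / n) atTop (𝓝 0)) :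
    ∀ᵐ ω ∂ℙ, (μ {z₀}).toReal ≤
      Filter.liminf (fun n =>
        ((derivative^[k n] (Pn ξ n ω)).rootMultiplicity z₀ : ℝ) / ((n - k n : ℕ) : ℝ))
        atTop :=
  atom_liminf_multiplicity_general μ z₀ ξ hmeas hindep hdist k hko
end

section
/- Let B be a disk in ℂ of area 1, let Z_1, Z_2, … be i.i.d. uniform on B, and let ε > 0. Let (k_n) be integers with 1 ≤ k_n < n and (k_n log n)/n → 0. Then there exists n₀ such that for all n ≥ n₀, P( |Σ_{1 ≤ i_1 < … < i_{k_n} ≤ n} Z_{i_1}⋯Z_{i_{k_n}}| ≤ e^{−ε n} ) ≤ n^{−2}. -/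
open MeasureTheory ProbabilityTheory Filter Topology
open scoped ENNReal

/-!
Since `|z|⁻¹` is locally integrable in the plane, the uniform law `ν` on a disk satisfies
`∫ |z - c|⁻¹ dν(z) ≤ K` uniformly in `c`, hence `∫ |d + z a|⁻¹ dν(z) ≤ K |a|⁻¹`.
Writing `e_{j+1}(Z_1, …, Z_{m+1}) = e_{j+1}(Z_1, …, Z_m) + Z_{m+1} e_j(Z_1, …, Z_m)` and
integrating out the independent `Z_{m+1}` first gives, by induction, the negative moment bound
`𝔼 |e_k(Z_1, …, Z_n)|⁻¹ ≤ K ^ k`. Markov's inequality then bounds `ℙ(|e_k| ≤ e^{-εn})` by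
`K ^ k e^{-εn}`, which is at most `n⁻²` as soon as `k log K + 2 log n ≤ εn`; this holds eventually
because both `k_n / n` and `log n / n` tend to `0`.
-/

theorem lintegral_ball_inv_enorm_lt_top {E : Type*} [NormedAddCommGroup E] [NormedSpace ℝ E]
    [FiniteDimensional ℝ E] [MeasurableSpace E] [BorelSpace E] {μ : Measure E}
    [μ.IsAddHaarMeasure] (hE : 1 < Module.finrank ℝ E) (R : ℝ) :
    ∫⁻ x in Metric.ball 0 R, ‖x‖ₑ⁻¹ ∂μ < ∞ := by
  have : Nontrivial E := Module.nontrivial_of_finrank_pos (R := ℝ) (by omega)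
  have hint : IntegrableOn (fun x : E ↦ ‖x‖⁻¹) (Metric.ball 0 R) μ :=
    integrableOn_ball_of_norm_le_rpow (C := 1) (α := 1) hE.le (by exact_mod_cast hE)
      (ae_of_all _ fun x ↦ by simp [Real.rpow_neg_one]) (by fun_prop)
  -- the real `‖x‖⁻¹` is `0` at the origin, where `‖x‖ₑ⁻¹ = ∞`; they agree off the null set `{0}`
  refine lt_of_eq_of_lt (lintegral_congr_ae ?_) hint.2
  filter_upwards [ae_restrict_of_ae (compl_mem_ae_iff.2 (measure_singleton (μ := μ) 0))]
    with x hx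
  have hx : ‖x‖ ≠ 0 := by simpa using hx
  rw [Real.enorm_eq_ofReal (by positivity), ENNReal.ofReal_inv_of_pos (by positivity), ofReal_norm]

theorem lintegral_inv_enorm_sub_le {E : Type*} [NormedAddCommGroup E] [MeasurableSpace E]
    [OpensMeasurableSpace E] [MeasurableAdd E] {μ ν : Measure E} [μ.IsAddRightInvariant]
    (hν : ν ≤ μ) (c : E) :
    ∫⁻ z, ‖z - c‖ₑ⁻¹ ∂ν ≤ ∫⁻ x in Metric.ball 0 1, ‖x‖ₑ⁻¹ ∂μ + ν Set.univ := by
  set g := (Metric.ball (0 : E) 1).indicator fun x ↦ ‖x‖ₑ⁻¹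
  have hpt : ∀ z, ‖z - c‖ₑ⁻¹ ≤ g (z - c) + 1 := by
    intro z
    by_cases hz : z - c ∈ Metric.ball 0 1
    · simp [g, hz]
    · have : 1 ≤ ‖z - c‖ₑ := by simpa [← ofReal_norm] using hz
      simp [g, hz, this]
  calc ∫⁻ z, ‖z - c‖ₑ⁻¹ ∂ν
      ≤ ∫⁻ z, g (z - c) + 1 ∂ν := lintegral_mono hpt
    _ = ∫⁻ z, g (z - c) ∂ν + ν Set.univ := by
        rw [lintegral_add_right _ measurable_const, lintegral_const, one_mul]
    _ ≤ ∫⁻ z, g (z - c) ∂μ + ν Set.univ := by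
        gcongr ?_ + _
        exact lintegral_mono' hν le_rfl
    _ = ∫⁻ x in Metric.ball 0 1, ‖x‖ₑ⁻¹ ∂μ + ν Set.univ := by
        rw [lintegral_sub_right_eq_self g c, lintegral_indicator Metric.isOpen_ball.measurableSet]

theorem lintegral_inv_enorm_add_mul_le {𝕜 : Type*} [NormedField 𝕜] [MeasurableSpace 𝕜]
    {ν : Measure 𝕜} {K : ℝ≥0∞} (hK₀ : K ≠ 0) (hK : ∀ c, ∫⁻ z, ‖z - c‖ₑ⁻¹ ∂ν ≤ K) (a d : 𝕜) :
    ∫⁻ z, ‖d + z * a‖ₑ⁻¹ ∂ν ≤ K * ‖a‖ₑ⁻¹ := by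
  rcases eq_or_ne a 0 with rfl | ha
  · simp [ENNReal.mul_top hK₀]
  have hfactor : ∀ z, ‖d + z * a‖ₑ⁻¹ = ‖a‖ₑ⁻¹ * ‖z - -(d / a)‖ₑ⁻¹ := fun z ↦ by
    rw [show d + z * a = a * (z - -(d / a)) by field_simp; ring, enorm_mul,
      ENNReal.mul_inv (by simp [ha]) (by simp)]
  simp_rw [hfactor]
  rw [lintegral_const_mul' _ _ (by simpa using ha), mul_comm]
  gcongr
  exact hK _

theorem Multiset.esymm_cons {R : Type*} [CommSemiring R] (a : R) (s : Multiset R) (k : ℕ) :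
    (a ::ₘ s).esymm (k + 1) = s.esymm (k + 1) + a * s.esymm k := by
  simp [Multiset.esymm, Multiset.powersetCard_cons, Multiset.sum_map_mul_left]

section

variable {Ω ι R : Type*} [MeasurableSpace Ω] [CommSemiring R] [MeasurableSpace R]
  [MeasurableAdd₂ R] [MeasurableMul₂ R]

theorem Finset.measurable_esymm_map_val {f : ι → Ω → R} (hf : ∀ i, Measurable (f i))
    (S : Finset ι) (k : ℕ) : Measurable fun ω ↦ (S.val.map (f · ω)).esymm k := by
  simp_rw [Finset.esymm_map_val]
  exact Finset.measurable_sum _ fun t _ ↦ Finset.measurable_prod _ fun i _ ↦ hf i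

theorem ProbabilityTheory.iIndepFun.indepFun_esymm_of_notMem {μ : Measure Ω} {Z : ι → Ω → R}
    (hindep : iIndepFun Z μ) (hmeas : ∀ i, Measurable (Z i)) {S : Finset ι} {i : ι}
    (hi : i ∉ S) : IndepFun (fun ω k ↦ (S.val.map (Z · ω)).esymm k) (Z i) μ := by
  have hS := hindep.indepFun_finset S {i} (Finset.disjoint_singleton_right.2 hi) hmeas
  have hg : Measurable fun (v : S → R) k ↦ (S.attach.val.map (v ·)).esymm k :=
    measurable_pi_lambda _ fun k ↦
      S.attach.measurable_esymm_map_val (fun j ↦ measurable_pi_apply j) k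
  convert hS.comp hg (measurable_pi_apply ⟨i, Finset.mem_singleton_self i⟩) using 1
  · ext ω k
    exact congrArg (Multiset.esymm · k) (Multiset.attach_map_val' S.val (Z · ω)).symm
  · rfl

end

section

variable {Ω α β : Type*} [MeasurableSpace Ω] [MeasurableSpace α] [MeasurableSpace β]
  {μ : Measure Ω} [IsFiniteMeasure μ] {X : Ω → α} {Y : Ω → β}

theorem ProbabilityTheory.IndepFun.lintegral_comp_eq_lintegral_lintegral_map
    (hXY : IndepFun X Y μ) (hX : Measurable X) (hY : Measurable Y) {F : α × β → ℝ≥0∞}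
    (hF : Measurable F) :
    ∫⁻ ω, F (X ω, Y ω) ∂μ = ∫⁻ x, ∫⁻ y, F (x, y) ∂(μ.map Y) ∂(μ.map X) := by
  rw [← lintegral_prod _ hF.aemeasurable, ← hXY.map_prod_eq_prod_map_map hX.aemeasurable
    hY.aemeasurable, lintegral_map hF (hX.prodMk hY)]

theorem ProbabilityTheory.IndepFun.lintegral_inv_enorm_add_mul_le {𝕜 : Type*} [NormedField 𝕜]
    [MeasurableSpace 𝕜] [OpensMeasurableSpace 𝕜] [MeasurableAdd₂ 𝕜] [MeasurableMul₂ 𝕜]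
    {Y : Ω → 𝕜} (hXY : IndepFun X Y μ) (hX : Measurable X) (hY : Measurable Y)
    {a d : α → 𝕜} (ha : Measurable a) (hd : Measurable d) {K : ℝ≥0∞}
    (hK : ∀ a d, ∫⁻ z, ‖d + z * a‖ₑ⁻¹ ∂(μ.map Y) ≤ K * ‖a‖ₑ⁻¹) :
    ∫⁻ ω, ‖d (X ω) + Y ω * a (X ω)‖ₑ⁻¹ ∂μ ≤ K * ∫⁻ ω, ‖a (X ω)‖ₑ⁻¹ ∂μ := by
  have hF : Measurable fun p : α × 𝕜 ↦ ‖d p.1 + p.2 * a p.1‖ₑ⁻¹ := by fun_prop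
  have haX : Measurable fun x ↦ ‖a x‖ₑ⁻¹ := ha.enorm.inv
  calc ∫⁻ ω, ‖d (X ω) + Y ω * a (X ω)‖ₑ⁻¹ ∂μ
      = ∫⁻ x, ∫⁻ z, ‖d x + z * a x‖ₑ⁻¹ ∂(μ.map Y) ∂(μ.map X) :=
        hXY.lintegral_comp_eq_lintegral_lintegral_map hX hY hF
    _ ≤ ∫⁻ x, K * ‖a x‖ₑ⁻¹ ∂(μ.map X) := lintegral_mono fun x ↦ hK _ _
    _ = K * ∫⁻ ω, ‖a (X ω)‖ₑ⁻¹ ∂μ := by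
        rw [lintegral_const_mul _ haX, lintegral_map haX hX]

end

theorem ProbabilityTheory.iIndepFun.lintegral_inv_enorm_esymm_le {Ω ι 𝕜 : Type*}
    [MeasurableSpace Ω] {μ : Measure Ω} [IsProbabilityMeasure μ] [NormedField 𝕜]
    [MeasurableSpace 𝕜] [OpensMeasurableSpace 𝕜] [MeasurableAdd₂ 𝕜] [MeasurableMul₂ 𝕜]
    {Z : ι → Ω → 𝕜} (hindep : iIndepFun Z μ) (hmeas : ∀ i, Measurable (Z i)) {K : ℝ≥0∞}
    (hK : ∀ i a d, ∫⁻ z, ‖d + z * a‖ₑ⁻¹ ∂(μ.map (Z i)) ≤ K * ‖a‖ₑ⁻¹) {S : Finset ι} {k : ℕ}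
    (hk : k ≤ S.card) : ∫⁻ ω, ‖(S.val.map (Z · ω)).esymm k‖ₑ⁻¹ ∂μ ≤ K ^ k := by
  classical
  induction S using Finset.induction_on generalizing k with
  | empty =>
    obtain rfl : k = 0 := by simpa using hk
    simp [Multiset.esymm]
  | insert i S hi ih =>
    cases k with
    | zero => simp [Multiset.esymm]
    | succ k =>
      rw [Finset.card_insert_of_notMem hi, Nat.succ_le_succ_iff] at hk
      simp_rw [Finset.insert_val_of_notMem hi, Multiset.map_cons, Multiset.esymm_cons]
      calc _ ≤ K * ∫⁻ ω, ‖(S.val.map (Z · ω)).esymm k‖ₑ⁻¹ ∂μ :=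
            (hindep.indepFun_esymm_of_notMem hmeas hi).lintegral_inv_enorm_add_mul_le
              (measurable_pi_lambda _ fun k ↦ S.measurable_esymm_map_val hmeas k) (hmeas i)
              (measurable_pi_apply k) (measurable_pi_apply (k + 1)) (hK i)
        _ ≤ K * K ^ k := by gcongr; exact ih hk
        _ = K ^ (k + 1) := (pow_succ' K k).symm

theorem meas_norm_le_le_lintegral_inv_enorm_mul {Ω E : Type*} [MeasurableSpace Ω]
    {μ : Measure Ω} [NormedAddCommGroup E] [MeasurableSpace E] [OpensMeasurableSpace E]
    {S : Ω → E} (hS : AEMeasurable S μ) {t : ℝ} (ht : 0 < t) :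
    μ {ω | ‖S ω‖ ≤ t} ≤ (∫⁻ ω, ‖S ω‖ₑ⁻¹ ∂μ) * ENNReal.ofReal t := by
  have hset : {ω | ‖S ω‖ ≤ t} = {ω | (ENNReal.ofReal t)⁻¹ ≤ ‖S ω‖ₑ⁻¹} := by
    ext ω
    simp [ENNReal.inv_le_inv, ← ofReal_norm, ENNReal.ofReal_le_ofReal_iff ht.le]
  calc μ {ω | ‖S ω‖ ≤ t}
      ≤ (∫⁻ ω, ‖S ω‖ₑ⁻¹ ∂μ) / (ENNReal.ofReal t)⁻¹ := hset ▸ meas_ge_le_lintegral_div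
        hS.enorm.inv (ENNReal.inv_ne_zero.2 ENNReal.ofReal_ne_top)
        (ENNReal.inv_ne_top.2 (ENNReal.ofReal_pos.2 ht).ne')
    _ = (∫⁻ ω, ‖S ω‖ₑ⁻¹ ∂μ) * ENNReal.ofReal t := by rw [div_eq_mul_inv, inv_inv]

theorem tendsto_div_of_tendsto_mul_log_div {k : ℕ → ℕ}
    (hk : Tendsto (fun n ↦ (k n : ℝ) * Real.log n / n) atTop (𝓝 0)) :
    Tendsto (fun n ↦ (k n : ℝ) / n) atTop (𝓝 0) := by
  refine squeeze_zero' (Eventually.of_forall fun n ↦ by positivity) ?_ hk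
  filter_upwards [eventually_ge_atTop 3] with n hn
  have hlog : 1 ≤ Real.log n := by
    have hn' : (3 : ℝ) ≤ n := by exact_mod_cast hn
    rw [Real.le_log_iff_exp_le (by positivity)]
    linarith [Real.exp_one_lt_d9]
  gcongr
  exact le_mul_of_one_le_right (by positivity) hlog

theorem eventually_le_and_mul_add_two_mul_log_le {k : ℕ → ℕ}
    (hk : Tendsto (fun n ↦ (k n : ℝ) * Real.log n / n) atTop (𝓝 0)) (L : ℝ) {ε : ℝ}
    (hε : 0 < ε) : ∀ᶠ n : ℕ in atTop, k n ≤ n ∧ k n * L + 2 * Real.log n ≤ ε * n := by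
  have hkn := tendsto_div_of_tendsto_mul_log_div hk
  have hlog : Tendsto (fun n : ℕ ↦ Real.log n / n) atTop (𝓝 0) := by
    simpa [Function.comp_def] using
      (Real.tendsto_pow_log_div_mul_add_atTop 1 0 1 one_ne_zero).comp tendsto_natCast_atTop_atTop
  have hsum : Tendsto (fun n : ℕ ↦ k n / n * L + 2 * (Real.log n / n)) atTop (𝓝 0) := by
    simpa using (hkn.mul_const L).add (hlog.const_mul 2)
  filter_upwards [hkn.eventually_lt_const one_pos, hsum.eventually_lt_const hε,
    eventually_gt_atTop 0] with n hkn hsum hn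
  have hn' : (0 : ℝ) < n := by exact_mod_cast hn
  constructor
  · exact_mod_cast ((div_lt_one hn').1 hkn).le
  · rw [show k n / n * L + 2 * (Real.log n / n) = (k n * L + 2 * Real.log n) / n by ring,
      div_lt_iff₀ hn'] at hsum
    exact hsum.le

theorem ENNReal.pow_mul_ofReal_exp_le_inv_sq {K : ℝ≥0∞} (hK₀ : K ≠ 0) (hK : K ≠ ∞) {k n : ℕ}
    (hn : 0 < n) {ε : ℝ} (h : k * Real.log K.toReal + 2 * Real.log n ≤ ε * n) :
    K ^ k * ENNReal.ofReal (Real.exp (-(ε * n))) ≤ ((n : ℝ≥0∞) ^ 2)⁻¹ := by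
  have hc : 0 < K.toReal := ENNReal.toReal_pos hK₀ hK
  have hn' : (0 : ℝ) < n := by exact_mod_cast hn
  have hreal : K.toReal ^ k * Real.exp (-(ε * n)) ≤ ((n : ℝ) ^ 2)⁻¹ := by
    have hpow : K.toReal ^ k = Real.exp (k * Real.log K.toReal) := by
      rw [Real.exp_nat_mul, Real.exp_log hc]
    have hsq : ((n : ℝ) ^ 2)⁻¹ = Real.exp (-(2 * Real.log n)) := by
      rw [Real.exp_neg, ← Real.log_rpow hn', Real.exp_log (by positivity), Real.rpow_two]
    rw [hpow, hsq, ← Real.exp_add, Real.exp_le_exp]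
    linarith
  calc K ^ k * ENNReal.ofReal (Real.exp (-(ε * n)))
      = ENNReal.ofReal (K.toReal ^ k * Real.exp (-(ε * n))) := by
        rw [ENNReal.ofReal_mul (by positivity), ENNReal.ofReal_pow hc.le, ENNReal.ofReal_toReal hK]
    _ ≤ ENNReal.ofReal (((n : ℝ) ^ 2)⁻¹) := ENNReal.ofReal_le_ofReal hreal
    _ = ((n : ℝ≥0∞) ^ 2)⁻¹ := by
        rw [ENNReal.ofReal_inv_of_pos (by positivity), ENNReal.ofReal_pow hn'.le,
          ENNReal.ofReal_natCast]

theorem uniform_disk_esymm_anticoncentration_general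
    {Ω : Type*} [MeasureSpace Ω] [IsProbabilityMeasure (ℙ : Measure Ω)]
    (b : ℂ) (r : ℝ)
    (Z : ℕ → Ω → ℂ) (hmeas : ∀ i, Measurable (Z i))
    (hindep : iIndepFun Z ℙ)
    (hdist : ∀ i, Measure.map (Z i) ℙ = volume.restrict (Metric.ball b r))
    (ε : ℝ) (hε : 0 < ε)
    (k : ℕ → ℕ)
    (hko : Tendsto (fun n => (k n : ℝ) * Real.log n / n) atTop (𝓝 0)) :
    ∃ n₀ : ℕ, ∀ n : ℕ, n₀ ≤ n →
      ℙ {ω : Ω | ‖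
          (∑ s ∈ Finset.powersetCard (k n) (Finset.range n), ∏ i ∈ s, Z i ω)‖
        ≤ Real.exp (-(ε * n))}
        ≤ ((n : ℝ≥0∞) ^ 2)⁻¹ := by
  set K := (∫⁻ x in Metric.ball (0 : ℂ) 1, ‖x‖ₑ⁻¹) + 1
  have hK : K ≠ ∞ := ENNReal.add_ne_top.2
    ⟨(lintegral_ball_inv_enorm_lt_top (by simp) 1).ne, ENNReal.one_ne_top⟩
  have hlaw : ∀ i c, ∫⁻ z, ‖z - c‖ₑ⁻¹ ∂(Measure.map (Z i) ℙ) ≤ K := fun i c ↦ by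
    have := Measure.isProbabilityMeasure_map (μ := (ℙ : Measure Ω)) (hmeas i).aemeasurable
    calc _ ≤ _ := lintegral_inv_enorm_sub_le (hdist i ▸ Measure.restrict_le_self) c
      _ = K := by rw [measure_univ]
  have hmoment : ∀ n, k n ≤ n → ∫⁻ ω, ‖((Finset.range n).val.map (Z · ω)).esymm (k n)‖ₑ⁻¹
      ≤ K ^ k n := fun n hkn ↦ hindep.lintegral_inv_enorm_esymm_le hmeas
    (fun i ↦ lintegral_inv_enorm_add_mul_le (by simp [K]) (hlaw i)) (by simpa using hkn)
  obtain ⟨n₀, hn₀⟩ := ((eventually_le_and_mul_add_two_mul_log_le hko (Real.log K.toReal) hε).and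
    (eventually_gt_atTop 0)).exists_forall_of_atTop
  refine ⟨n₀, fun n hn ↦ ?_⟩
  obtain ⟨⟨hkn, hbound⟩, hn⟩ := hn₀ n hn
  simp_rw [← Finset.esymm_map_val]
  calc _ ≤ (∫⁻ ω, ‖((Finset.range n).val.map (Z · ω)).esymm (k n)‖ₑ⁻¹) *
        ENNReal.ofReal (Real.exp (-(ε * n))) := meas_norm_le_le_lintegral_inv_enorm_mul
          ((Finset.range n).measurable_esymm_map_val hmeas _).aemeasurable (Real.exp_pos _)
    _ ≤ K ^ k n * ENNReal.ofReal (Real.exp (-(ε * n))) := by gcongr; exact hmoment n hkn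
    _ ≤ ((n : ℝ≥0∞) ^ 2)⁻¹ := ENNReal.pow_mul_ofReal_exp_le_inv_sq (by simp [K]) hK hn hbound

/-- for i.i.d. uniform random variables on a disk `B ⊂ ℂ` of area `1` and
`(k_n log n)/n → 0`, the `k_n`-th elementary symmetric polynomial `S` of `Z_1,…,Z_n`
satisfies `ℙ(|S| ≤ e^{-εn}) ≤ n^{-2}` for all sufficiently large `n`. -/
theorem uniform_disk_esymm_anticoncentration
    {Ω : Type*} [MeasureSpace Ω] [IsProbabilityMeasure (ℙ : Measure Ω)]
    (b : ℂ) (r : ℝ) (hr : 0 < r) (hvol : volume (Metric.ball b r) = 1)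
    (Z : ℕ → Ω → ℂ) (hmeas : ∀ i, Measurable (Z i))
    (hindep : iIndepFun Z ℙ)
    (hdist : ∀ i, Measure.map (Z i) ℙ = volume.restrict (Metric.ball b r))
    (ε : ℝ) (hε : 0 < ε)
    (k : ℕ → ℕ) (hk : ∀ n, 2 ≤ n → 1 ≤ k n ∧ k n < n)
    (hko : Tendsto (fun n => (k n : ℝ) * Real.log n / n) atTop (𝓝 0)) :
    ∃ n₀ : ℕ, ∀ n : ℕ, n₀ ≤ n →
      ℙ {ω : Ω | ‖
          (∑ s ∈ Finset.powersetCard (k n) (Finset.range n), ∏ i ∈ s, Z i ω)‖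
        ≤ Real.exp (-(ε * n))}
        ≤ ((n : ℝ≥0∞) ^ 2)⁻¹ :=
  uniform_disk_esymm_anticoncentration_general b r Z hmeas hindep hdist ε hε k hko
end
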